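/- arXiv:math/0205077 — 6 statements merged into one kernel-verified Lean document; each statement's English description precedes it below -/
import Mathlib

section
/- Let k be an even positive natural number. A pairing σ of {1,…,k} is non-crossing if and only if σ can be reduced to the empty pairing by successively removing paired neighbors. (Here σ has paired neighbors if {i,i+1} ∈ σ for some 1 ≤ i ≤ k−1, and removing the paired neighbors {i,i+1} from σ produces the pairing σ−{i,i+1} of {1,…,k−2} obtained from σ∖{{i,i+1}} by relabeling j ↦ j for j < i and j ↦ j−2 for j > i+1.) -/
/-- A pairing of `{1,…,k}`: a collection of blocks, each of cardinality 2, contained in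
`{1,…,k}`, such that every element of `{1,…,k}` belongs to exactly one block. -/
def IsPairing (k : ℕ) (σ : Finset (Finset ℕ)) : Prop :=
  (∀ B ∈ σ, B.card = 2) ∧ (∀ B ∈ σ, B ⊆ Finset.Icc 1 k) ∧
    ∀ i ∈ Finset.Icc 1 k, ∃! B, B ∈ σ ∧ i ∈ B

/-- A pairing is crossing if some two of its blocks `{i₁,j₁}`, `{i₂,j₂}` satisfy
`i₁ < i₂ < j₁ < j₂`. -/
def IsCrossing (σ : Finset (Finset ℕ)) : Prop :=
  ∃ i₁ i₂ j₁ j₂ : ℕ, ({i₁, j₁} : Finset ℕ) ∈ σ ∧ ({i₂, j₂} : Finset ℕ) ∈ σ ∧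
    i₁ < i₂ ∧ i₂ < j₁ ∧ j₁ < j₂

/-- Removal of the paired neighbors `{i,i+1}` from `σ`: delete the block `{i,i+1}` and
relabel `j ↦ j` for `j < i` (indeed for `j ≤ i+1`) and `j ↦ j−2` for `j > i+1`. -/
def removeNeighbors (σ : Finset (Finset ℕ)) (i : ℕ) : Finset (Finset ℕ) :=
  (σ.erase {i, i + 1}).image fun B => B.image fun j => if i + 1 < j then j - 2 else j

/-- `Reducible k σ` : the pairing `σ` of `{1,…,k}` can be reduced to the empty pairing by
successively removing paired neighbors. -/
inductive Reducible : ℕ → Finset (Finset ℕ) → Prop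
  | empty : Reducible 0 ∅
  | step {k : ℕ} {σ : Finset (Finset ℕ)} (i : ℕ) (h1 : 1 ≤ i) (h2 : i ≤ k - 1)
      (hmem : ({i, i + 1} : Finset ℕ) ∈ σ)
      (h : Reducible (k - 2) (removeNeighbors σ i)) : Reducible k σ

namespace NCAux

/-- The relabeling map used in `removeNeighbors`. -/
def fmap (i j : ℕ) : ℕ := if i + 1 < j then j - 2 else j

/-- The inverse relabeling map. -/
def gmap (i m : ℕ) : ℕ := if m < i then m else m + 2

/-- `j` avoids the pair `{i, i+1}`. -/
def Avoid (i j : ℕ) : Prop := j < i ∨ i + 1 < j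

lemma removeNeighbors_eq (σ : Finset (Finset ℕ)) (i : ℕ) :
    removeNeighbors σ i = (σ.erase {i, i + 1}).image fun B => B.image (fmap i) := rfl

lemma gmap_fmap {i j : ℕ} (h : Avoid i j) : gmap i (fmap i j) = j := by
  unfold Avoid at h; unfold fmap gmap; split_ifs <;> omega

lemma fmap_gmap (i m : ℕ) : fmap i (gmap i m) = m := by
  unfold fmap gmap; split_ifs <;> omega

lemma avoid_gmap (i m : ℕ) : Avoid i (gmap i m) := by
  unfold Avoid gmap; split_ifs <;> omega

lemma fmap_lt {i a b : ℕ} (ha : Avoid i a) (hb : Avoid i b) (h : a < b) :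
    fmap i a < fmap i b := by
  unfold Avoid at ha hb; unfold fmap; split_ifs <;> omega

lemma gmap_lt {i a b : ℕ} (h : a < b) : gmap i a < gmap i b := by
  unfold gmap; split_ifs <;> omega

lemma fmap_inj {i a b : ℕ} (ha : Avoid i a) (hb : Avoid i b) (h : fmap i a = fmap i b) :
    a = b := by
  have := gmap_fmap ha; have := gmap_fmap hb
  rw [h] at *; omega

lemma pair_eq {a b c d : ℕ} (hab : a < b) (hcd : c < d)
    (h : ({a, b} : Finset ℕ) = {c, d}) : a = c ∧ b = d := by
  have h1 : a ∈ ({c, d} : Finset ℕ) := h ▸ Finset.mem_insert_self a {b}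
  have h2 : b ∈ ({c, d} : Finset ℕ) := h ▸ (by simp)
  have h3 : c ∈ ({a, b} : Finset ℕ) := h.symm ▸ Finset.mem_insert_self c {d}
  simp only [Finset.mem_insert, Finset.mem_singleton] at h1 h2 h3
  omega

/-- In a pairing, elements of blocks other than `{i,i+1}` avoid `i` and `i+1`. -/
lemma mem_avoid {k i : ℕ} {σ : Finset (Finset ℕ)} (hp : IsPairing k σ)
    (hmem : ({i, i + 1} : Finset ℕ) ∈ σ) {B : Finset ℕ} (hB : B ∈ σ)
    (hne : B ≠ {i, i + 1}) {j : ℕ} (hj : j ∈ B) : Avoid i j := by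
  have hjIcc : j ∈ Finset.Icc 1 k := hp.2.1 B hB hj
  by_contra hcon
  unfold Avoid at hcon
  push_neg at hcon
  have hj' : j = i ∨ j = i + 1 := by omega
  obtain ⟨C, _, hCuniq⟩ := hp.2.2 j hjIcc
  have hBC : B = C := hCuniq B ⟨hB, hj⟩
  have hIC : ({i, i + 1} : Finset ℕ) = C := by
    refine hCuniq _ ⟨hmem, ?_⟩
    rcases hj' with h | h <;> simp [h]
  exact hne (hBC.trans hIC.symm)

lemma exists_pair {B : Finset ℕ} (h : B.card = 2) : ∃ a b, a < b ∧ B = {a, b} := by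
  obtain ⟨a, b, hab, rfl⟩ := Finset.card_eq_two.mp h
  rcases lt_or_gt_of_ne hab with h | h
  · exact ⟨a, b, h, rfl⟩
  · exact ⟨b, a, h, Finset.pair_comm a b⟩

lemma image_pair (f : ℕ → ℕ) (a b : ℕ) :
    ({a, b} : Finset ℕ).image f = {f a, f b} := by
  simp [Finset.image_insert]

lemma pairing_remove {k i : ℕ} {σ : Finset (Finset ℕ)} (hp : IsPairing k σ)
    (h1 : 1 ≤ i) (h2 : i + 1 ≤ k) (hmem : ({i, i + 1} : Finset ℕ) ∈ σ) :
    IsPairing (k - 2) (removeNeighbors σ i) := by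
  rw [removeNeighbors_eq]
  obtain ⟨hcard, hsub, huniq⟩ := hp
  have hp' : IsPairing k σ := ⟨hcard, hsub, huniq⟩
  refine ⟨?_, ?_, ?_⟩
  · intro B hB
    simp only [Finset.mem_image, Finset.mem_erase] at hB
    obtain ⟨C, ⟨hne, hC⟩, rfl⟩ := hB
    rw [Finset.card_image_of_injOn, hcard C hC]
    intro a ha b hb hfab
    exact fmap_inj (mem_avoid hp' hmem hC hne ha) (mem_avoid hp' hmem hC hne hb) hfab
  · intro B hB
    simp only [Finset.mem_image, Finset.mem_erase] at hB
    obtain ⟨C, ⟨hne, hC⟩, rfl⟩ := hB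
    intro m hm
    simp only [Finset.mem_image] at hm
    obtain ⟨j, hj, rfl⟩ := hm
    have hav := mem_avoid hp' hmem hC hne hj
    have hjIcc : j ∈ Finset.Icc 1 k := hsub C hC hj
    rw [Finset.mem_Icc] at hjIcc ⊢
    unfold Avoid at hav; unfold fmap; split_ifs <;> omega
  · intro m hm
    rw [Finset.mem_Icc] at hm
    have hjIcc : gmap i m ∈ Finset.Icc 1 k := by
      rw [Finset.mem_Icc]; unfold gmap; split_ifs <;> omega
    obtain ⟨C, ⟨hCσ, hjC⟩, hCuniq⟩ := huniq (gmap i m) hjIcc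
    have hav := avoid_gmap i m
    have hne : C ≠ {i, i + 1} := by
      intro h
      rw [h] at hjC
      simp only [Finset.mem_insert, Finset.mem_singleton] at hjC
      unfold Avoid at hav; omega
    refine ⟨C.image (fmap i), ⟨?_, ?_⟩, ?_⟩
    · exact Finset.mem_image_of_mem _ (Finset.mem_erase.mpr ⟨hne, hCσ⟩)
    · rw [← fmap_gmap i m]
      exact Finset.mem_image_of_mem _ hjC
    · rintro B ⟨hB, hmB⟩
      simp only [Finset.mem_image, Finset.mem_erase] at hB
      obtain ⟨D, ⟨hDne, hDσ⟩, rfl⟩ := hB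
      simp only [Finset.mem_image] at hmB
      obtain ⟨d, hd, hfd⟩ := hmB
      have hdav := mem_avoid hp' hmem hDσ hDne hd
      have : d = gmap i m := by rw [← gmap_fmap hdav, hfd]
      subst this
      rw [hCuniq D ⟨hDσ, hd⟩]

lemma crossing_remove {k i : ℕ} {σ : Finset (Finset ℕ)} (hp : IsPairing k σ)
    (hmem : ({i, i + 1} : Finset ℕ) ∈ σ) (hc : IsCrossing σ) :
    IsCrossing (removeNeighbors σ i) := by
  obtain ⟨a, b, c, d, hB1, hB2, hab, hbc, hcd⟩ := hc
  have hne1 : ({a, c} : Finset ℕ) ≠ {i, i + 1} := by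
    intro h
    obtain ⟨h1, h2⟩ := pair_eq (by omega) (by omega) h
    omega
  have hne2 : ({b, d} : Finset ℕ) ≠ {i, i + 1} := by
    intro h
    obtain ⟨h1, h2⟩ := pair_eq (by omega) (by omega) h
    omega
  have hava : Avoid i a := mem_avoid hp hmem hB1 hne1 (by simp)
  have havc : Avoid i c := mem_avoid hp hmem hB1 hne1 (by simp)
  have havb : Avoid i b := mem_avoid hp hmem hB2 hne2 (by simp)
  have havd : Avoid i d := mem_avoid hp hmem hB2 hne2 (by simp)
  refine ⟨fmap i a, fmap i b, fmap i c, fmap i d, ?_, ?_, ?_, ?_, ?_⟩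
  · rw [removeNeighbors_eq, ← image_pair]
    exact Finset.mem_image_of_mem _ (Finset.mem_erase.mpr ⟨hne1, hB1⟩)
  · rw [removeNeighbors_eq, ← image_pair]
    exact Finset.mem_image_of_mem _ (Finset.mem_erase.mpr ⟨hne2, hB2⟩)
  · exact fmap_lt hava havb hab
  · exact fmap_lt havb havc hbc
  · exact fmap_lt havc havd hcd

lemma crossing_of_remove {k i : ℕ} {σ : Finset (Finset ℕ)} (hp : IsPairing k σ)
    (hmem : ({i, i + 1} : Finset ℕ) ∈ σ)
    (hc : IsCrossing (removeNeighbors σ i)) : IsCrossing σ := by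
  obtain ⟨a, b, c, d, hB1, hB2, hab, hbc, hcd⟩ := hc
  rw [removeNeighbors_eq] at hB1 hB2
  simp only [Finset.mem_image, Finset.mem_erase] at hB1 hB2
  obtain ⟨C, ⟨hCne, hCσ⟩, hCeq⟩ := hB1
  obtain ⟨D, ⟨hDne, hDσ⟩, hDeq⟩ := hB2
  have hC : C = {gmap i a, gmap i c} := by
    have : (C.image (fmap i)).image (gmap i) = C := by
      rw [Finset.image_image]
      rw [show (gmap i ∘ fmap i) = fun j => gmap i (fmap i j) from rfl]
      rw [Finset.image_congr (g := id) ?_, Finset.image_id]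
      intro x hx
      exact gmap_fmap (mem_avoid hp hmem hCσ hCne hx)
    rw [← this, hCeq, image_pair]
  have hD : D = {gmap i b, gmap i d} := by
    have : (D.image (fmap i)).image (gmap i) = D := by
      rw [Finset.image_image]
      rw [show (gmap i ∘ fmap i) = fun j => gmap i (fmap i j) from rfl]
      rw [Finset.image_congr (g := id) ?_, Finset.image_id]
      intro x hx
      exact gmap_fmap (mem_avoid hp hmem hDσ hDne hx)
    rw [← this, hDeq, image_pair]
  exact ⟨gmap i a, gmap i b, gmap i c, gmap i d, hC ▸ hCσ, hD ▸ hDσ,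
    gmap_lt hab, gmap_lt hbc, gmap_lt hcd⟩

lemma pairing_zero {σ : Finset (Finset ℕ)} (hp : IsPairing 0 σ) : σ = ∅ := by
  ext B
  simp only [Finset.notMem_empty, iff_false]
  intro hB
  have h2 := hp.1 B hB
  have h3 := hp.2.1 B hB
  rw [Finset.Icc_eq_empty (by omega)] at h3
  rw [Finset.subset_empty.mp h3] at h2
  simp at h2

lemma forward : ∀ k, Even k → ∀ σ : Finset (Finset ℕ),
    IsPairing k σ → ¬ IsCrossing σ → Reducible k σ := by
  intro k
  induction k using Nat.strong_induction_on with
  | _ k ih =>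
    intro hke σ hp hnc
    rcases Nat.eq_zero_or_pos k with rfl | hk
    · rw [pairing_zero hp]
      exact Reducible.empty
    · have hk2 : 2 ≤ k := by
        obtain ⟨r, hr⟩ := hke; omega
      -- there exists a block, giving a gap
      have hex : ∃ n, ∃ a, ({a, a + (n + 1)} : Finset ℕ) ∈ σ := by
        obtain ⟨B, ⟨hBσ, h1B⟩, _⟩ := hp.2.2 1 (by rw [Finset.mem_Icc]; omega)
        obtain ⟨a, b, hab, rfl⟩ := exists_pair (hp.1 B hBσ)
        exact ⟨b - a - 1, a, by rwa [show a + (b - a - 1 + 1) = b by omega]⟩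
      classical
      obtain ⟨a, ha⟩ := Nat.find_spec hex
      set d := Nat.find hex with hd
      have haIcc : a ∈ Finset.Icc 1 k := hp.2.1 _ ha (by simp)
      have hbIcc : a + (d + 1) ∈ Finset.Icc 1 k := hp.2.1 _ ha (by simp)
      rw [Finset.mem_Icc] at haIcc hbIcc
      have hd0 : d = 0 := by
        by_contra hd0
        have hd1 : 1 ≤ d := by omega
        -- block containing a + 1
        obtain ⟨C, ⟨hCσ, hC1⟩, _⟩ := hp.2.2 (a + 1) (by rw [Finset.mem_Icc]; omega)
        obtain ⟨c₁, c₂, hc12, rfl⟩ := exists_pair (hp.1 C hCσ)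
        set m := c₂ - c₁ - 1 with hm
        have hCm : ({c₁, c₁ + (m + 1)} : Finset ℕ) ∈ σ := by
          rwa [show c₁ + (m + 1) = c₂ by omega]
        have hdm : d ≤ m := by
          by_contra hlt
          exact Nat.find_min hex (by omega) ⟨c₁, hCm⟩
        simp only [Finset.mem_insert, Finset.mem_singleton] at hC1
        rcases hC1 with h | h
        · -- a + 1 = c₁, crossing a < a+1 < a+d+1 < c₂
          refine hnc ⟨a, a + 1, a + (d + 1), c₂, ha, ?_, by omega, by omega, by omega⟩
          rwa [h]
        · -- a + 1 = c₂, crossing c₁ < a < a+1 < a+d+1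
          refine hnc ⟨c₁, a, a + 1, a + (d + 1), ?_, ha, by omega, by omega, by omega⟩
          rwa [h]
      simp only [hd0] at ha hbIcc
      -- ha : {a, a + (0 + 1)} ∈ σ, i.e. {a, a + 1} ∈ σ
      have ha' : ({a, a + 1} : Finset ℕ) ∈ σ := by
        rwa [show a + (0 + 1) = a + 1 by omega] at ha
      have hbnd : a + 1 ≤ k := by omega
      refine Reducible.step a (by omega) (by omega) ha' ?_
      refine ih (k - 2) (by omega) ?_ _ (pairing_remove hp (by omega) hbnd ha') ?_
      · obtain ⟨r, hr⟩ := hke; exact ⟨r - 1, by omega⟩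
      intro hc
      exact hnc (crossing_of_remove hp ha' hc)

lemma backward {k : ℕ} {σ : Finset (Finset ℕ)} (h : Reducible k σ) :
    IsPairing k σ → ¬ IsCrossing σ := by
  induction h with
  | empty =>
    intro _ hc
    obtain ⟨a, b, c, d, h1, _⟩ := hc
    simp at h1
  | step i h1 h2 hmem h ih =>
    rename_i k' σ'
    intro hp hc
    have hk2 : i + 1 ≤ k' := by omega
    exact ih (pairing_remove hp h1 hk2 hmem) (crossing_remove hp hmem hc)

end NCAux

/-- A pairing of `{1,…,k}` (for `k` even and positive) is non-crossing if and only if it can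
be reduced to the empty pairing by successively removing paired neighbors. -/
theorem stmt0 (k : ℕ) (hk : 0 < k) (hke : Even k) (σ : Finset (Finset ℕ))
    (hσ : IsPairing k σ) : ¬ IsCrossing σ ↔ Reducible k σ := by
  exact ⟨fun h => NCAux.forward k hke σ hσ h, fun h => NCAux.backward h hσ⟩
end

section
/- Let k be an even positive natural number and let σ be a pairing of {1,…,k}. Consider the k-gon with vertices v₁,…,v_k (indices taken modulo k) and let ~ be the equivalence relation on {v₁,…,v_k} generated by the relations v_i ~ v_{j+1} and v_{i+1} ~ v_j for every block {i,j} ∈ σ. If σ is non-crossing, then ~ has exactly k/2 + 1 equivalence classes; if σ is crossing, then ~ has at most k/2 equivalence classes. -/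
/-- The relation generating the vertex identifications of the quotient graph: the vertices of
the `k`-gon are indexed by `ZMod k` (the vertex `v_i` corresponding to `i mod k`), and for
each block `{i,j}` of the pairing we identify `v_i ~ v_{j+1}` and `v_{i+1} ~ v_j`. -/
def vertexRel (k : ℕ) (σ : Finset (Finset ℕ)) (x y : ZMod k) : Prop :=
  ∃ i j : ℕ, ({i, j} : Finset ℕ) ∈ σ ∧
    ((x = (i : ZMod k) ∧ y = (j : ZMod k) + 1) ∨
     (x = (i : ZMod k) + 1 ∧ y = (j : ZMod k)))


private def liftk (k : ℕ) (x : ZMod k) : ℕ := if x.val = 0 then k else x.val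

private lemma liftk_mem {k : ℕ} (hk : 0 < k) (x : ZMod k) :
    1 ≤ liftk k x ∧ liftk k x ≤ k := by
  haveI : NeZero k := ⟨hk.ne'⟩
  have := ZMod.val_lt x
  unfold liftk; split <;> omega

private lemma liftk_cast {k : ℕ} (hk : 0 < k) {m : ℕ} (h1 : 1 ≤ m) (h2 : m ≤ k) :
    liftk k ((m : ℕ) : ZMod k) = m := by
  haveI : NeZero k := ⟨hk.ne'⟩
  rcases eq_or_lt_of_le h2 with rfl | h
  · have h0 : ((m : ℕ) : ZMod m) = 0 := ZMod.natCast_self m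
    simp [liftk, h0]
  · rw [liftk, ZMod.val_cast_of_lt h, if_neg (by omega)]

private lemma cast_liftk {k : ℕ} (hk : 0 < k) (x : ZMod k) :
    ((liftk k x : ℕ) : ZMod k) = x := by
  haveI : NeZero k := ⟨hk.ne'⟩
  unfold liftk
  split
  · next h =>
    rw [ZMod.natCast_self]
    exact ((ZMod.val_eq_zero x).mp h).symm
  · exact ZMod.natCast_rightInverse x

private def fN (σ : Finset (Finset ℕ)) (m : ℕ) : Finset (Finset ℕ) :=
  σ.filter (fun B => ∃ p ∈ B, ∃ q ∈ B, p < m ∧ m ≤ q)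

private lemma mem_fN_pair {σ : Finset (Finset ℕ)} {a b m : ℕ} (hab : a < b) :
    (({a, b} : Finset ℕ) ∈ fN σ m) ↔ (({a, b} : Finset ℕ) ∈ σ ∧ a < m ∧ m ≤ b) := by
  simp only [fN, Finset.mem_filter, Finset.mem_insert, Finset.mem_singleton]
  constructor
  · rintro ⟨hσ, p, hp, q, hq, h1, h2⟩
    refine ⟨hσ, ?_, ?_⟩ <;> rcases hp with rfl | rfl <;> rcases hq with rfl | rfl <;> omega
  · rintro ⟨hσ, h1, h2⟩
    exact ⟨hσ, a, Or.inl rfl, b, Or.inr rfl, h1, h2⟩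

section Pairing

variable {k : ℕ} {σ : Finset (Finset ℕ)}

private lemma block_eq_of_mem (hσ : IsPairing k σ) {B B' : Finset ℕ} {x : ℕ}
    (hB : B ∈ σ) (hB' : B' ∈ σ) (hx : x ∈ B) (hx' : x ∈ B') : B = B' := by
  have hxI : x ∈ Finset.Icc 1 k := hσ.2.1 B hB hx
  obtain ⟨C, -, hu⟩ := hσ.2.2 x hxI
  rw [hu B ⟨hB, hx⟩, hu B' ⟨hB', hx'⟩]

private lemma mem_bounds (hσ : IsPairing k σ) {B : Finset ℕ} (hB : B ∈ σ) {x : ℕ}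
    (hx : x ∈ B) : 1 ≤ x ∧ x ≤ k := Finset.mem_Icc.mp (hσ.2.1 B hB hx)

private lemma partner_eq (hσ : IsPairing k σ) {i j j' : ℕ}
    (h : ({i, j} : Finset ℕ) ∈ σ) (h' : ({i, j'} : Finset ℕ) ∈ σ)
    (hj : j ≠ i) (hj' : j' ≠ i) : j = j' := by
  have he : ({i, j} : Finset ℕ) = {i, j'} :=
    block_eq_of_mem hσ h h' (Finset.mem_insert_self i {j}) (Finset.mem_insert_self i {j'})
  have : j ∈ ({i, j'} : Finset ℕ) := he ▸ Finset.mem_insert_of_mem (Finset.mem_singleton_self j)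
  rcases Finset.mem_insert.mp this with h0 | h0
  · exact absurd h0 hj
  · exact Finset.mem_singleton.mp h0

private lemma block_rep (hσ : IsPairing k σ) {B : Finset ℕ} (hB : B ∈ σ) :
    ∃ a b : ℕ, a < b ∧ B = {a, b} ∧ 1 ≤ a ∧ b ≤ k := by
  obtain ⟨x, y, hxy, rfl⟩ := Finset.card_eq_two.mp (hσ.1 B hB)
  have hx := mem_bounds hσ hB (Finset.mem_insert_self x {y})
  have hy := mem_bounds hσ hB (Finset.mem_insert_of_mem (Finset.mem_singleton_self y))
  rcases lt_or_gt_of_ne hxy with h | h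
  · exact ⟨x, y, h, rfl, hx.1, hy.2⟩
  · exact ⟨y, x, h, Finset.pair_comm x y, hy.1, hx.2⟩

private lemma sigma_card (hσ : IsPairing k σ) : 2 * σ.card = k := by
  classical
  have hunion : σ.biUnion id = Finset.Icc 1 k := by
    ext x
    simp only [Finset.mem_biUnion, id]
    constructor
    · rintro ⟨B, hB, hx⟩; exact hσ.2.1 B hB hx
    · intro hx
      obtain ⟨B, ⟨hB, hxB⟩, -⟩ := hσ.2.2 x hx
      exact ⟨B, hB, hxB⟩
  have hcard := Finset.card_biUnion (s := σ) (t := id)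
    (fun B hB B' hB' hne => Finset.disjoint_left.mpr
      (fun x hx hx' => hne (block_eq_of_mem hσ hB hB' hx hx')))
  rw [hunion] at hcard
  have hsum : ∑ B ∈ σ, (id B).card = 2 * σ.card := by
    rw [Finset.sum_congr rfl (fun B hB => show (id B).card = 2 from hσ.1 B hB)]
    simp [mul_comm]
  rw [hsum] at hcard
  simpa using hcard.symm

private lemma nc_rule (hσ : IsPairing k σ) (hnc : ¬ IsCrossing σ) {p q a b : ℕ}
    (h1 : ({p, q} : Finset ℕ) ∈ σ) (h2 : ({a, b} : Finset ℕ) ∈ σ) :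
    ¬ (p < a ∧ a < q ∧ q < b) := fun ⟨u, v, w⟩ => hnc ⟨p, a, q, b, h1, h2, u, v, w⟩

end Pairing

section G
open Relation

private lemma eqvGen_extend_pair {α : Type*} {r : α → α → Prop} {a b x y : α}
    (h : EqvGen (fun x y => r x y ∨ (x = a ∧ y = b)) x y) :
    EqvGen r x y ∨ (EqvGen r x a ∧ EqvGen r b y) ∨ (EqvGen r x b ∧ EqvGen r a y) := by
  induction h with
  | rel x y h =>
    rcases h with h | ⟨rfl, rfl⟩
    · exact Or.inl (EqvGen.rel _ _ h)
    · exact Or.inr (Or.inl ⟨EqvGen.refl _, EqvGen.refl _⟩)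
  | refl x => exact Or.inl (EqvGen.refl _)
  | symm x y _ ih =>
    rcases ih with h | ⟨h1, h2⟩ | ⟨h1, h2⟩
    · exact Or.inl h.symm
    · exact Or.inr (Or.inr ⟨h2.symm, h1.symm⟩)
    · exact Or.inr (Or.inl ⟨h2.symm, h1.symm⟩)
  | trans x y z _ _ ih1 ih2 =>
    rcases ih1 with h1 | ⟨h1a, h1b⟩ | ⟨h1a, h1b⟩ <;>
      rcases ih2 with h2 | ⟨h2a, h2b⟩ | ⟨h2a, h2b⟩
    · exact Or.inl (h1.trans _ _ _ h2)
    · exact Or.inr (Or.inl ⟨h1.trans _ _ _ h2a, h2b⟩)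
    · exact Or.inr (Or.inr ⟨h1.trans _ _ _ h2a, h2b⟩)
    · exact Or.inr (Or.inl ⟨h1a, h1b.trans _ _ _ h2⟩)
    · exact Or.inl ((h1a.trans _ _ _ ((h1b.trans _ _ _ h2a).symm)).trans _ _ _ h2b)
    · exact Or.inl (h1a.trans _ _ _ h2b)
    · exact Or.inr (Or.inr ⟨h1a, h1b.trans _ _ _ h2⟩)
    · exact Or.inl (h1a.trans _ _ _ h2b)
    · exact Or.inl ((h1a.trans _ _ _ ((h1b.trans _ _ _ h2a).symm)).trans _ _ _ h2b)

private lemma card_quot_le_extend {α : Type*} [Finite α] (r : α → α → Prop) (a b : α) :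
    Nat.card (Quot r) ≤ Nat.card (Quot (fun x y => r x y ∨ (x = a ∧ y = b))) + 1 := by
  classical
  haveI : Finite (Quot r) := Finite.of_surjective _ Quot.mk_surjective
  haveI : Finite (Quot (fun x y => r x y ∨ (x = a ∧ y = b))) :=
    Finite.of_surjective _ Quot.mk_surjective
  set r' : α → α → Prop := fun x y => r x y ∨ (x = a ∧ y = b) with hr'
  let φ : Quot r → Quot r' := Quot.lift (Quot.mk r') (fun x y h => Quot.sound (Or.inl h))
  have key : ∀ p q : Quot r, φ p = φ q →
      p = q ∨ (p = Quot.mk r a ∧ q = Quot.mk r b) ∨ (p = Quot.mk r b ∧ q = Quot.mk r a) := by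
    intro p q
    induction p using Quot.ind with | _ x => ?_
    induction q using Quot.ind with | _ y => ?_
    intro h
    have h' : Relation.EqvGen r' x y := Quot.eq.mp h
    rcases eqvGen_extend_pair h' with h0 | ⟨h1, h2⟩ | ⟨h1, h2⟩
    · exact Or.inl (Quot.eqvGen_sound h0)
    · exact Or.inr (Or.inl ⟨Quot.eqvGen_sound h1, (Quot.eqvGen_sound h2).symm⟩)
    · exact Or.inr (Or.inr ⟨Quot.eqvGen_sound h1, (Quot.eqvGen_sound h2).symm⟩)
  set v : Quot r := Quot.mk r b with hv
  have hinj : Function.Injective (fun p : {x : Quot r // x ≠ v} => φ p.1) := by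
    rintro ⟨p, hp⟩ ⟨q, hq⟩ h
    simp only at h
    rcases key p q h with h0 | ⟨h1, h2⟩ | ⟨h1, h2⟩
    · exact Subtype.ext h0
    · exact absurd h2 hq
    · exact absurd h1 hp
  have h1 : Nat.card {x : Quot r // x ≠ v} ≤ Nat.card (Quot r') :=
    Nat.card_le_card_of_injective _ hinj
  have h2 : Nat.card (Quot r) = Nat.card {x : Quot r // x ≠ v} + 1 := by
    rw [← Nat.card_congr (Equiv.optionSubtypeNe v), Finite.card_option]
  omega

private lemma card_quot_le_list {α : Type*} [Finite α] (r : α → α → Prop)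
    (L : List (α × α))
    (h : ∀ x y : α, Quot.mk (fun x y => r x y ∨ (x, y) ∈ L) x
        = Quot.mk (fun x y => r x y ∨ (x, y) ∈ L) y) :
    Nat.card (Quot r) ≤ L.length + 1 := by
  induction L generalizing r with
  | nil =>
    have e : (fun x y : α => r x y ∨ (x, y) ∈ ([] : List (α × α))) = r := by
      funext x y; simp
    rw [e] at h
    haveI : Subsingleton (Quot r) :=
      ⟨fun p q => by
        induction p using Quot.ind with | _ x => ?_
        induction q using Quot.ind with | _ y => ?_
        exact h x y⟩
    have : Nat.card (Quot r) ≤ Nat.card PUnit.{1} :=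
      Nat.card_le_card_of_injective (fun _ => PUnit.unit)
        (fun p q _ => Subsingleton.elim p q)
    simpa using this
  | cons p L ih =>
    obtain ⟨a, b⟩ := p
    set r₁ : α → α → Prop := fun x y => r x y ∨ (x = a ∧ y = b) with hr₁
    have e : (fun x y : α => r₁ x y ∨ (x, y) ∈ L)
        = (fun x y : α => r x y ∨ (x, y) ∈ (a, b) :: L) := by
      funext x y
      simp only [hr₁, List.mem_cons, Prod.mk.injEq, eq_iff_iff]
      tauto
    have hb : Nat.card (Quot r₁) ≤ L.length + 1 := by
      apply ih
      intro x y
      rw [e]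
      exact h x y
    rw [hr₁] at hb
    have ha := card_quot_le_extend r a b
    simp only [List.length_cons]
    omega

end G
section Core

variable {k : ℕ} {σ : Finset (Finset ℕ)}

/-- In a non-crossing pairing, for a block `{a,b}` with `a < b`, the invariant `fN` agrees at
vertex `a` and at vertex `b+1` (cyclically), and at vertex `b` and `a+1`. -/
private lemma key_f (hσ : IsPairing k σ) (hnc : ¬ IsCrossing σ) {a b : ℕ}
    (hab : ({a, b} : Finset ℕ) ∈ σ) (h : a < b) :
    (fN σ a = fN σ (if b = k then 1 else b + 1)) ∧ (fN σ b = fN σ (a + 1)) := by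
  have ha := mem_bounds hσ hab (Finset.mem_insert_self a {b})
  have hb := mem_bounds hσ hab (Finset.mem_insert_of_mem (Finset.mem_singleton_self b))
  have main : ∀ B' ∈ σ, ∀ m m' : ℕ,
      ((m = a ∧ (m' = if b = k then 1 else b + 1)) ∨ (m = b ∧ m' = a + 1)) →
      (B' ∈ fN σ m ↔ B' ∈ fN σ m') := by
    intro B' hB' m m' hmm
    obtain ⟨a', b', hab', rfl, ha', hb'⟩ := block_rep hσ hB'
    rw [mem_fN_pair hab', mem_fN_pair hab']
    have hnc1 := nc_rule hσ hnc hab hB'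
    have hnc2 := nc_rule hσ hnc hB' hab
    have hcases : (a' = a ∧ b' = b) ∨ (a' ≠ a ∧ a' ≠ b ∧ b' ≠ a ∧ b' ≠ b) := by
      by_cases he : ({a', b'} : Finset ℕ) = {a, b}
      · left
        have h1 : a ∈ ({a', b'} : Finset ℕ) := he ▸ Finset.mem_insert_self a {b}
        have h2 : b ∈ ({a', b'} : Finset ℕ) :=
          he ▸ Finset.mem_insert_of_mem (Finset.mem_singleton_self b)
        simp only [Finset.mem_insert, Finset.mem_singleton] at h1 h2
        omega
      · right
        have hd : ∀ x ∈ ({a', b'} : Finset ℕ), x ∉ ({a, b} : Finset ℕ) := by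
          intro x hx hx'
          exact he (block_eq_of_mem hσ hB' hab hx hx')
        have h1 := hd a' (Finset.mem_insert_self a' {b'})
        have h2 := hd b' (Finset.mem_insert_of_mem (Finset.mem_singleton_self b'))
        simp only [Finset.mem_insert, Finset.mem_singleton] at h1 h2
        push_neg at h1 h2
        exact ⟨h1.1, h1.2, h2.1, h2.2⟩
    constructor
    · rintro ⟨hs, u, v⟩
      refine ⟨hs, ?_, ?_⟩ <;> split_ifs at hmm ⊢ <;> omega
    · rintro ⟨hs, u, v⟩
      refine ⟨hs, ?_, ?_⟩ <;> split_ifs at hmm ⊢ <;> omega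
  constructor
  · apply Finset.ext
    intro B'
    by_cases hB' : B' ∈ σ
    · exact main B' hB' _ _ (Or.inl ⟨rfl, rfl⟩)
    · simp only [fN, Finset.mem_filter]
      exact ⟨fun h => absurd h.1 hB', fun h => absurd h.1 hB'⟩
  · apply Finset.ext
    intro B'
    by_cases hB' : B' ∈ σ
    · exact main B' hB' _ _ (Or.inr ⟨rfl, rfl⟩)
    · simp only [fN, Finset.mem_filter]
      exact ⟨fun h => absurd h.1 hB', fun h => absurd h.1 hB'⟩

private lemma f_invariant (hk : 0 < k) (hσ : IsPairing k σ) (hnc : ¬ IsCrossing σ) :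
    ∀ x y : ZMod k, vertexRel k σ x y → fN σ (liftk k x) = fN σ (liftk k y) := by
  rintro x y ⟨i, j, hB, hcase⟩
  have hij : i ≠ j := by
    intro he
    have := hσ.1 _ hB
    rw [he] at this
    simp at this
  have hi := mem_bounds hσ hB (Finset.mem_insert_self i {j})
  have hj := mem_bounds hσ hB (Finset.mem_insert_of_mem (Finset.mem_singleton_self j))
  have hsucc : ∀ m : ℕ, 1 ≤ m → m ≤ k →
      liftk k (((m : ℕ) : ZMod k) + 1) = if m = k then 1 else m + 1 := by
    intro m h1 h2
    have e : ((m : ℕ) : ZMod k) + 1 = ((m + 1 : ℕ) : ZMod k) := by push_cast; ring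
    rw [e]
    split_ifs with h
    · subst h
      have e2 : ((m + 1 : ℕ) : ZMod m) = ((1 : ℕ) : ZMod m) := by
        push_cast [ZMod.natCast_self]; ring
      rw [e2, liftk_cast hk le_rfl h1]
    · exact liftk_cast hk (by omega) (by omega)
  rcases hcase with ⟨rfl, rfl⟩ | ⟨rfl, rfl⟩
  · rw [liftk_cast hk hi.1 hi.2, hsucc j hj.1 hj.2]
    rcases lt_or_gt_of_ne hij with h | h
    · exact (key_f hσ hnc hB h).1
    · rw [if_neg (by omega)]
      exact (key_f hσ hnc (by rwa [Finset.pair_comm]) h).2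
  · rw [liftk_cast hk hj.1 hj.2, hsucc i hi.1 hi.2]
    rcases lt_or_gt_of_ne hij with h | h
    · rw [if_neg (by omega)]
      exact ((key_f hσ hnc hB h).2).symm
    · exact ((key_f hσ hnc (by rwa [Finset.pair_comm]) h).1).symm

private lemma quot_chain {k : ℕ} (R : ZMod k → ZMod k → Prop) (a n : ℕ)
    (h : ∀ m : ℕ, a ≤ m → m < a + n →
      Quot.mk R ((m : ℕ) : ZMod k) = Quot.mk R (((m : ℕ) : ZMod k) + 1)) :
    Quot.mk R ((a : ℕ) : ZMod k) = Quot.mk R (((a + n : ℕ) : ZMod k)) := by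
  induction n with
  | zero => rfl
  | succ n ih =>
    have h1 := ih (fun m hm hm' => h m hm (by omega))
    have h2 := h (a + n) (by omega) (by omega)
    have e : (((a + n : ℕ) : ZMod k) + 1) = (((a + (n + 1)) : ℕ) : ZMod k) := by
      push_cast; ring
    rw [h1, h2, e]

private lemma quot_zmod_subsingleton {k : ℕ} (hk : 0 < k) (R : ZMod k → ZMod k → Prop)
    (h : ∀ m : ℕ, 1 ≤ m → m ≤ k →
      Quot.mk R ((m : ℕ) : ZMod k) = Quot.mk R (((m : ℕ) : ZMod k) + 1)) :
    ∀ x y : ZMod k, Quot.mk R x = Quot.mk R y := by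
  haveI : NeZero k := ⟨hk.ne'⟩
  have step : ∀ x : ZMod k, Quot.mk R x = Quot.mk R (x + 1) := by
    intro x
    have h1 := liftk_mem hk x
    have h2 := h (liftk k x) h1.1 h1.2
    rwa [cast_liftk hk x] at h2
  have zero : ∀ n : ℕ, Quot.mk R ((n : ℕ) : ZMod k) = Quot.mk R 0 := by
    intro n
    induction n with
    | zero => simp
    | succ n ih =>
      have e : (((n + 1 : ℕ)) : ZMod k) = ((n : ℕ) : ZMod k) + 1 := by push_cast; ring
      rw [e, ← step, ih]
  intro x y
  have hx := zero (ZMod.val x)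
  have hy := zero (ZMod.val y)
  rw [ZMod.natCast_rightInverse x] at hx
  rw [ZMod.natCast_rightInverse y] at hy
  rw [hx, hy]

end Core
/-- If the pairing `σ` of `{1,…,k}` is non-crossing, then the equivalence relation generated
by the vertex identifications has exactly `k/2 + 1` classes; if `σ` is crossing, it has at
most `k/2` classes. -/
theorem stmt1 (k : ℕ) (hk : 0 < k) (hke : Even k) (σ : Finset (Finset ℕ))
    (hσ : IsPairing k σ) :
    (¬ IsCrossing σ → Nat.card (Quot (vertexRel k σ)) = k / 2 + 1) ∧
    (IsCrossing σ → Nat.card (Quot (vertexRel k σ)) ≤ k / 2) := by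
  classical
  haveI : NeZero k := ⟨hk.ne'⟩
  haveI : Finite (Quot (vertexRel k σ)) := Finite.of_surjective _ Quot.mk_surjective
  have hk2 : 2 ≤ k := by rcases hke with ⟨m, rfl⟩; omega
  -- the partner function
  have hpart0 : ∀ i : ℕ, ∃ j : ℕ, 1 ≤ i → i ≤ k →
      (({i, j} : Finset ℕ) ∈ σ ∧ j ≠ i ∧ 1 ≤ j ∧ j ≤ k) := by
    intro i
    by_cases hi : 1 ≤ i ∧ i ≤ k
    · obtain ⟨B, ⟨hB, hiB⟩, -⟩ := hσ.2.2 i (Finset.mem_Icc.mpr hi)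
      obtain ⟨x, y, hxy, rfl⟩ := Finset.card_eq_two.mp (hσ.1 B hB)
      have hxb := mem_bounds hσ hB (Finset.mem_insert_self x {y})
      have hyb := mem_bounds hσ hB (Finset.mem_insert_of_mem (Finset.mem_singleton_self y))
      rcases Finset.mem_insert.mp hiB with rfl | hy
      · exact ⟨y, fun _ _ => ⟨hB, hxy.symm, hyb.1, hyb.2⟩⟩
      · have : i = y := Finset.mem_singleton.mp hy
        subst this
        exact ⟨x, fun _ _ => ⟨by rwa [Finset.pair_comm], hxy, hxb.1, hxb.2⟩⟩
    · exact ⟨0, fun h1 h2 => absurd ⟨h1, h2⟩ hi⟩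
  choose π hπ using hpart0
  have hπmem : ∀ i, 1 ≤ i → i ≤ k → ({i, π i} : Finset ℕ) ∈ σ :=
    fun i h1 h2 => (hπ i h1 h2).1
  have hπne : ∀ i, 1 ≤ i → i ≤ k → π i ≠ i := fun i h1 h2 => (hπ i h1 h2).2.1
  have hπbd : ∀ i, 1 ≤ i → i ≤ k → 1 ≤ π i ∧ π i ≤ k := fun i h1 h2 => (hπ i h1 h2).2.2
  have hπuniq : ∀ i j, 1 ≤ i → i ≤ k → ({i, j} : Finset ℕ) ∈ σ → j ≠ i → j = π i :=
    fun i j h1 h2 hB hne => partner_eq hσ hB (hπmem i h1 h2) hne (hπne i h1 h2)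
  have hπinv : ∀ i, 1 ≤ i → i ≤ k → π (π i) = i := by
    intro i h1 h2
    have hb := hπbd i h1 h2
    exact (hπuniq (π i) i hb.1 hb.2 (by rw [Finset.pair_comm]; exact hπmem i h1 h2)
      (Ne.symm (hπne i h1 h2))).symm
  set S : Finset ℕ := (Finset.Icc 1 k).filter (fun i => i < π i) with hS
  have hScard : S.card = σ.card := by
    apply Finset.card_bij (fun i _ => ({i, π i} : Finset ℕ))
    · intro i hi
      simp only [hS, Finset.mem_filter, Finset.mem_Icc] at hi
      exact hπmem i hi.1.1 hi.1.2
    · intro i hi i' hi' he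
      simp only [hS, Finset.mem_filter, Finset.mem_Icc] at hi hi'
      have h1 : i ∈ ({i', π i'} : Finset ℕ) := he ▸ Finset.mem_insert_self i {π i}
      have h2 : i' ∈ ({i, π i} : Finset ℕ) := he ▸ Finset.mem_insert_self i' {π i'}
      simp only [Finset.mem_insert, Finset.mem_singleton] at h1 h2
      rcases h1 with h1 | h1
      · exact h1
      · rcases h2 with h2 | h2 <;> omega
    · intro B hB
      obtain ⟨a, b, hab, rfl, ha, hb⟩ := block_rep hσ hB
      have hbk : 1 ≤ b ∧ b ≤ k := mem_bounds hσ hB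
        (Finset.mem_insert_of_mem (Finset.mem_singleton_self b))
      have hpa : b = π a := hπuniq a b ha (by omega) hB (by omega)
      refine ⟨a, ?_, ?_⟩
      · simp only [hS, Finset.mem_filter, Finset.mem_Icc]
        exact ⟨⟨ha, by omega⟩, by omega⟩
      · rw [← hpa]
  have hσcard : 2 * σ.card = k := sigma_card hσ
  constructor
  · -- non-crossing case
    intro hnc
    -- UPPER BOUND
    set L : List (ZMod k × ZMod k) := S.toList.map (fun i : ℕ => ((Nat.cast i : ZMod k), (Nat.cast (π i) : ZMod k)))
      with hL
    set Rm : ZMod k → ZMod k → Prop := fun x y => vertexRel k σ x y ∨ (x, y) ∈ L with hRm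
    have hlen : L.length = k / 2 := by
      simp only [hL, List.length_map, Finset.length_toList, hScard]
      omega
    have hmkpair : ∀ m, 1 ≤ m → m ≤ k →
        Quot.mk Rm ((m : ℕ) : ZMod k) = Quot.mk Rm ((π m : ℕ) : ZMod k) := by
      intro m h1 h2
      rcases lt_trichotomy m (π m) with h | h | h
      · apply Quot.sound
        right
        apply List.mem_map.mpr
        exact ⟨m, Finset.mem_toList.mpr (Finset.mem_filter.mpr
          ⟨Finset.mem_Icc.mpr ⟨h1, h2⟩, h⟩), rfl⟩
      · exact absurd h.symm (hπne m h1 h2)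
      · symm
        apply Quot.sound
        right
        apply List.mem_map.mpr
        have hb := hπbd m h1 h2
        refine ⟨π m, Finset.mem_toList.mpr (Finset.mem_filter.mpr
          ⟨Finset.mem_Icc.mpr hb, by rw [hπinv m h1 h2]; exact h⟩), ?_⟩
        rw [hπinv m h1 h2]
    have hstep : ∀ m, 1 ≤ m → m ≤ k →
        Quot.mk Rm ((m : ℕ) : ZMod k) = Quot.mk Rm (((m : ℕ) : ZMod k) + 1) := by
      intro m h1 h2
      have h3 := hmkpair m h1 h2
      have h4 : Quot.mk Rm ((π m : ℕ) : ZMod k) = Quot.mk Rm (((m : ℕ) : ZMod k) + 1) :=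
        Quot.sound (Or.inl ⟨π m, m, by rw [Finset.pair_comm]; exact hπmem m h1 h2,
          Or.inl ⟨rfl, rfl⟩⟩)
      rw [h3, h4]
    have hsub := quot_zmod_subsingleton hk Rm hstep
    have hub := card_quot_le_list (vertexRel k σ) L hsub
    rw [hlen] at hub
    -- LOWER BOUND
    have hinv := f_invariant hk hσ hnc
    set F : Quot (vertexRel k σ) → Finset (Finset ℕ) :=
      Quot.lift (fun x => fN σ (liftk k x)) hinv with hF
    have hrep0 : ∀ B : Finset ℕ, ∃ p : ℕ × ℕ, B ∈ σ →
        (p.1 < p.2 ∧ B = {p.1, p.2} ∧ 1 ≤ p.1 ∧ p.2 ≤ k) := by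
      intro B
      by_cases hB : B ∈ σ
      · obtain ⟨a, b, h1, h2, h3, h4⟩ := block_rep hσ hB
        exact ⟨(a, b), fun _ => ⟨h1, h2, h3, h4⟩⟩
      · exact ⟨(0, 0), fun h => absurd h hB⟩
    choose rep hrep using hrep0
    set J : ({B // B ∈ σ} ⊕ PUnit) → Quot (vertexRel k σ) :=
      Sum.elim (fun B => Quot.mk _ ((((rep B.1).2 : ℕ)) : ZMod k))
        (fun _ => Quot.mk _ (((1 : ℕ)) : ZMod k)) with hJ
    have hFJ : ∀ B : {B // B ∈ σ}, F (J (Sum.inl B)) = fN σ ((rep B.1).2) := by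
      intro B
      obtain ⟨h1, h2, h3, h4⟩ := hrep B.1 B.2
      simp only [hJ, hF, Sum.elim_inl]
      rw [liftk_cast hk (by omega) h4]
    have hF1 : F (J (Sum.inr PUnit.unit)) = fN σ 1 := by
      simp only [hJ, hF, Sum.elim_inr]
      rw [liftk_cast hk le_rfl (by omega)]
    have hfN1 : fN σ 1 = ∅ := by
      apply Finset.filter_eq_empty_iff.mpr
      intro B hB
      push_neg
      intro p hp q hq hlt
      have := mem_bounds hσ hB hp
      omega
    have hmemB : ∀ B (hB : B ∈ σ), B ∈ fN σ ((rep B).2) := by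
      intro B hB
      obtain ⟨h1, h2, h3, h4⟩ := hrep B hB
      set a := (rep B).1 with ha
      set b := (rep B).2 with hb
      have hB2 : ({a, b} : Finset ℕ) ∈ σ := by rw [← h2]; exact hB
      have hres := (mem_fN_pair h1).mpr ⟨hB2, h1, le_rfl⟩
      rwa [← h2] at hres
    have hmin : ∀ B (hB : B ∈ σ), ∀ B' ∈ fN σ ((rep B).2),
        B' = B ∨ ((rep B').1 < (rep B).1 ∧ (rep B).2 < (rep B').2) := by
      intro B hB B' hB'mem
      have hB' : B' ∈ σ := (Finset.mem_filter.mp hB'mem).1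
      obtain ⟨h1, h2, h3, h4⟩ := hrep B hB
      obtain ⟨h1', h2', h3', h4'⟩ := hrep B' hB'
      by_cases he : B' = B
      · exact Or.inl he
      right
      set a := (rep B).1 with ha
      set b := (rep B).2 with hbd
      set a' := (rep B').1 with ha'
      set b' := (rep B').2 with hb'
      rw [h2'] at hB'mem
      have hmem := (mem_fN_pair h1').mp hB'mem
      have hd : ∀ x ∈ B', x ∉ B := fun x hx hx' => he (block_eq_of_mem hσ hB' hB hx hx')
      have hda : a' ∉ B := hd _ (by rw [h2']; exact Finset.mem_insert_self _ _)
      have hdb : b' ∉ B := hd _ (by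
        rw [h2']; exact Finset.mem_insert_of_mem (Finset.mem_singleton_self _))
      rw [h2] at hda hdb
      simp only [Finset.mem_insert, Finset.mem_singleton] at hda hdb
      push_neg at hda hdb
      have hBp : ({a, b} : Finset ℕ) ∈ σ := by rw [← h2]; exact hB
      have hBp' : ({a', b'} : Finset ℕ) ∈ σ := by rw [← h2']; exact hB'
      have hnc1 := nc_rule hσ hnc hBp hBp'
      have hnc2 := nc_rule hσ hnc hBp' hBp
      omega
    have hJinj : Function.Injective J := by
      rintro (B | u) (C | v) h
      · have hFh := congrArg F h
        rw [hFJ, hFJ] at hFh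
        by_contra hne
        have hBC : B.1 ≠ C.1 := fun e => hne (congrArg Sum.inl (Subtype.ext e))
        have h1 : B.1 ∈ fN σ ((rep C.1).2) := by rw [← hFh]; exact hmemB B.1 B.2
        have h2 : C.1 ∈ fN σ ((rep B.1).2) := by rw [hFh]; exact hmemB C.1 C.2
        rcases hmin C.1 C.2 B.1 h1 with e | ⟨u1, u2⟩
        · exact hBC e
        rcases hmin B.1 B.2 C.1 h2 with e | ⟨v1, v2⟩
        · exact hBC e.symm
        omega
      · exfalso
        have hFh := congrArg F h
        rw [hFJ, hF1, hfN1] at hFh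
        have := hmemB B.1 B.2
        rw [hFh] at this
        simp at this
      · exfalso
        have hFh := congrArg F h
        rw [hF1, hFJ, hfN1] at hFh
        have := hmemB C.1 C.2
        rw [← hFh] at this
        simp at this
      · rw [Subsingleton.elim u v]
    have hlb := Nat.card_le_card_of_injective J hJinj
    have hcard : Nat.card ({B // B ∈ σ} ⊕ PUnit.{1}) = k / 2 + 1 := by
      rw [Nat.card_sum, Nat.card_eq_finsetCard]
      have : Nat.card PUnit.{1} = 1 := by simp
      omega
    rw [hcard] at hlb
    omega
  · -- crossing case
    intro hcr
    obtain ⟨i₁, i₂, j₁, j₂, hB1, hB2, hx1, hx2, hx3⟩ := hcr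
    have hb1 := mem_bounds hσ hB1 (Finset.mem_insert_self i₁ {j₁})
    have hb2 := mem_bounds hσ hB1 (Finset.mem_insert_of_mem (Finset.mem_singleton_self j₁))
    have hb3 := mem_bounds hσ hB2 (Finset.mem_insert_self i₂ {j₂})
    have hb4 := mem_bounds hσ hB2 (Finset.mem_insert_of_mem (Finset.mem_singleton_self j₂))
    have hπi₂ : π i₂ = j₂ := (hπuniq i₂ j₂ hb3.1 hb3.2 hB2 (by omega)).symm
    have hi₂S : i₂ ∈ S := by
      simp only [hS, Finset.mem_filter, Finset.mem_Icc]
      exact ⟨⟨hb3.1, hb3.2⟩, by omega⟩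
    set L' : List (ZMod k × ZMod k) :=
      (S.erase i₂).toList.map (fun i : ℕ => ((Nat.cast i : ZMod k), (Nat.cast (π i) : ZMod k))) with hL'
    set R' : ZMod k → ZMod k → Prop := fun x y => vertexRel k σ x y ∨ (x, y) ∈ L' with hR'
    have hlen' : L'.length = k / 2 - 1 := by
      simp only [hL', List.length_map, Finset.length_toList,
        Finset.card_erase_of_mem hi₂S, hScard]
      omega
    have hstep' : ∀ m, 1 ≤ m → m ≤ k → m ≠ i₂ → m ≠ j₂ →
        Quot.mk R' ((m : ℕ) : ZMod k) = Quot.mk R' (((m : ℕ) : ZMod k) + 1) := by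
      intro m h1 h2 hm1 hm2
      have hp : Quot.mk R' ((m : ℕ) : ZMod k) = Quot.mk R' ((π m : ℕ) : ZMod k) := by
        rcases lt_trichotomy m (π m) with h | h | h
        · apply Quot.sound
          right
          apply List.mem_map.mpr
          exact ⟨m, Finset.mem_toList.mpr (Finset.mem_erase.mpr ⟨hm1,
            Finset.mem_filter.mpr ⟨Finset.mem_Icc.mpr ⟨h1, h2⟩, h⟩⟩), rfl⟩
        · exact absurd h.symm (hπne m h1 h2)
        · symm
          apply Quot.sound
          right
          apply List.mem_map.mpr
          have hb := hπbd m h1 h2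
          have hpm : π m ≠ i₂ := by
            intro he
            have := hπinv m h1 h2
            rw [he, hπi₂] at this
            omega
          refine ⟨π m, Finset.mem_toList.mpr (Finset.mem_erase.mpr ⟨hpm,
            Finset.mem_filter.mpr ⟨Finset.mem_Icc.mpr hb,
              by rw [hπinv m h1 h2]; exact h⟩⟩), ?_⟩
          rw [hπinv m h1 h2]
      have hq : Quot.mk R' ((π m : ℕ) : ZMod k) = Quot.mk R' (((m : ℕ) : ZMod k) + 1) :=
        Quot.sound (Or.inl ⟨π m, m, by rw [Finset.pair_comm]; exact hπmem m h1 h2,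
          Or.inl ⟨rfl, rfl⟩⟩)
      rw [hp, hq]
    have rel1 : ∀ {p q : ℕ}, ({p, q} : Finset ℕ) ∈ σ →
        Quot.mk R' ((p : ℕ) : ZMod k) = Quot.mk R' (((q : ℕ) : ZMod k) + 1) :=
      fun {p q} h => Quot.sound (Or.inl ⟨p, q, h, Or.inl ⟨rfl, rfl⟩⟩)
    have rel2 : ∀ {p q : ℕ}, ({p, q} : Finset ℕ) ∈ σ →
        Quot.mk R' (((p : ℕ) : ZMod k) + 1) = Quot.mk R' ((q : ℕ) : ZMod k) :=
      fun {p q} h => Quot.sound (Or.inl ⟨p, q, h, Or.inr ⟨rfl, rfl⟩⟩)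
    have e1 : Quot.mk R' (((i₁ + 1 : ℕ)) : ZMod k) = Quot.mk R' ((i₂ : ℕ) : ZMod k) := by
      have := quot_chain R' (i₁ + 1) (i₂ - (i₁ + 1))
        (fun m hm hm' => hstep' m (by omega) (by omega) (by omega) (by omega))
      rwa [show (i₁ + 1) + (i₂ - (i₁ + 1)) = i₂ by omega] at this
    have e2 : Quot.mk R' ((j₁ : ℕ) : ZMod k) = Quot.mk R' ((j₂ : ℕ) : ZMod k) := by
      have := quot_chain R' j₁ (j₂ - j₁)
        (fun m hm hm' => hstep' m (by omega) (by omega) (by omega) (by omega))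
      rwa [show j₁ + (j₂ - j₁) = j₂ by omega] at this
    have e3 : Quot.mk R' (((i₁ : ℕ) : ZMod k) + 1) = Quot.mk R' ((j₁ : ℕ) : ZMod k) :=
      rel2 hB1
    have ecast : (((i₁ + 1 : ℕ)) : ZMod k) = ((i₁ : ℕ) : ZMod k) + 1 := by push_cast; ring
    have key : Quot.mk R' ((j₂ : ℕ) : ZMod k) = Quot.mk R' ((i₂ : ℕ) : ZMod k) := by
      rw [← e2, ← e3, ← ecast, e1]
    have hstepi₂ : Quot.mk R' ((i₂ : ℕ) : ZMod k)
        = Quot.mk R' (((i₂ : ℕ) : ZMod k) + 1) := by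
      have h5 := rel2 hB2
      rw [key] at h5
      exact h5.symm
    have hstepj₂ : Quot.mk R' ((j₂ : ℕ) : ZMod k)
        = Quot.mk R' (((j₂ : ℕ) : ZMod k) + 1) := by
      rw [key]
      exact rel1 hB2
    have hstepall : ∀ m, 1 ≤ m → m ≤ k →
        Quot.mk R' ((m : ℕ) : ZMod k) = Quot.mk R' (((m : ℕ) : ZMod k) + 1) := by
      intro m h1 h2
      by_cases hm1 : m = i₂
      · subst hm1; exact hstepi₂
      by_cases hm2 : m = j₂
      · subst hm2; exact hstepj₂
      exact hstep' m h1 h2 hm1 hm2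
    have hsub := quot_zmod_subsingleton hk R' hstepall
    have hub := card_quot_le_list (vertexRel k σ) L' hsub
    rw [hlen'] at hub
    omega
end

section
/- Let n be a positive natural number, let μ₁,…,μ_n be Borel probability measures on ℂ, and let ν̃ = (1/n!)·Σ_{π ∈ S_n} μ_{π(1)} × ⋯ × μ_{π(n)} be the symmetrization of the product measure μ₁ × ⋯ × μ_n on ℂⁿ. For p ∈ {1,…,n}, let ν̃^{(p)} be the marginal of ν̃ on the first p coordinates; in particular ν̃^{(1)} = (1/n)(μ₁ + ⋯ + μ_n). Then the total variation norm of the signed measure ν̃^{(p)} − ν̃^{(1)} × ⋯ × ν̃^{(1)} (p-fold product) is at most 2·((n−p)!·n^p/n! − 1). -/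
/-!
Write `P f = μ (f 0) × ⋯ × μ (f (p-1))` for `f : Fin p → Fin n`. Every injection `f` extends to
exactly `(n - p)!` permutations, so the marginal `ν̃⁽ᵖ⁾` is `(n - p)!/n!` times the sum of `P f`
over injective `f`, whereas `ν̃⁽¹⁾ × ⋯ × ν̃⁽¹⁾` is `n⁻ᵖ` times the sum of `P f` over all `f`.
Hence `ν̃⁽ᵖ⁾ ≤ b • (ν̃⁽¹⁾ × ⋯ × ν̃⁽¹⁾)` with `b = (n - p)! nᵖ / n!`. For probability measures
`μ ≤ b • ν` gives `μ - ν = (b - 1) • ν - (b • ν - μ)`, a difference of two measures of mass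
`b - 1` each, so `‖μ - ν‖ ≤ 2 (b - 1)`.
-/

open MeasureTheory
open scoped ENNReal

namespace Equiv.Perm

variable {α β : Type*} [Fintype α] [Fintype β] [DecidableEq β]

lemma card_extending_embedding (g f : α ↪ β) :
    Fintype.card {π : Perm β // ∀ a, π (g a) = f a}
      = (Fintype.card β - Fintype.card α).factorial := by
  let e₀ : Set.range g ≃ Set.range f :=
    (Equiv.ofInjective g g.injective).symm.trans (Equiv.ofInjective f f.injective)
  have hext (π : Perm β) : (∀ a, π (g a) = f a) ↔ ∀ y : Set.range g, π y = e₀ y := by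
    rw [Set.forall_subtype_range_iff]
    simp [e₀]
  have hcompl (h : α ↪ β) : Fintype.card ↥(Set.range h)ᶜ = Fintype.card β - Fintype.card α := by
    rw [Fintype.card_compl_set, Set.card_range_of_injective h.injective]
  rw [Fintype.card_congr ((Equiv.subtypeEquivRight hext).trans (Equiv.Set.compl e₀)),
    Fintype.card_equiv (Fintype.equivOfCardEq ((hcompl g).trans (hcompl f).symm)), hcompl]

lemma sum_comp_trans_embedding {M : Type*} [AddCommMonoid M] (g : α ↪ β) (F : (α ↪ β) → M) :
    ∑ π : Perm β, F (g.trans π.toEmbedding)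
      = (Fintype.card β - Fintype.card α).factorial • ∑ f : α ↪ β, F f := by
  classical
  rw [← Fintype.sum_fiberwise (fun π : Perm β => g.trans π.toEmbedding), Finset.smul_sum]
  refine Fintype.sum_congr _ _ fun f => ?_
  rw [← card_extending_embedding g f, Fintype.sum_congr _ (fun _ => F f) fun π => congrArg F π.2,
    Finset.sum_const, Finset.card_univ]
  congr 1
  refine Fintype.card_congr (Equiv.subtypeEquivRight fun π => ?_)
  simp [DFunLike.ext_iff]

end Equiv.Perm

namespace MeasureTheory.Measure

variable {ι κ α : Type*} [Fintype ι] [Fintype κ] [MeasurableSpace α]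

lemma pi_map_comp_embedding (m : ι → Measure α) [∀ i, IsProbabilityMeasure (m i)] (e : κ ↪ ι) :
    (Measure.pi m).map (fun z i => z (e i)) = Measure.pi fun i => m (e i) := by
  classical
  refine (pi_eq fun s hs => ?_).symm
  have hpre : (fun z : ι → α => fun i => z (e i)) ⁻¹' Set.univ.pi s
      = Set.univ.pi (Function.extend e s fun _ => Set.univ) := by
    ext z
    simp only [Set.mem_preimage, Set.mem_univ_pi]
    refine ⟨fun h j => ?_, fun h i => by simpa [e.injective.extend_apply] using h (e i)⟩
    by_cases hj : ∃ i, e i = j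
    · obtain ⟨i, rfl⟩ := hj
      simpa [e.injective.extend_apply] using h i
    · simp [Function.extend_apply' _ _ _ hj]
  rw [map_apply (by fun_prop) (.univ_pi hs), hpre, pi_pi]
  refine (Fintype.prod_of_injective e e.injective (fun i => m (e i) (s i))
    (fun j => m j (Function.extend e s (fun _ => Set.univ) j)) (fun j hj => ?_) fun i => ?_).symm
  · rw [Function.extend_apply' _ _ _ (by simpa using hj), measure_univ]
  · rw [e.injective.extend_apply]

lemma pi_smul_sum [DecidableEq κ] (m : ι → Measure α) [∀ i, IsFiniteMeasure (m i)] {c : ℝ≥0∞}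
    (hc : c ≠ ∞) :
    Measure.pi (fun _ : κ => c • ∑ j, m j)
      = c ^ Fintype.card κ • ∑ f : κ → ι, Measure.pi fun i => m (f i) := by
  have : IsFiniteMeasure (c • ∑ j, m j) := (∑ j, m j).smul_finite hc
  refine pi_eq fun s hs => ?_
  simp only [smul_apply, finsetSum_apply, pi_pi, smul_eq_mul, Finset.prod_mul_distrib,
    Finset.prod_const, Finset.card_univ, Finset.prod_univ_sum, Fintype.piFinset_univ]

end MeasureTheory.Measure

namespace MeasureTheory

section TotalVariation

variable {X : Type*} [MeasurableSpace X]

lemma totalVariation_toSignedMeasure_sub_le (μ ν : Measure X) [IsFiniteMeasure μ]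
    [IsFiniteMeasure ν] :
    (μ.toSignedMeasure - ν.toSignedMeasure).totalVariation Set.univ ≤ μ Set.univ + ν Set.univ := by
  rw [SignedMeasure.totalVariation_eq_variation]
  simpa using
    VectorMeasure.variation_sub_le (μ := μ.toSignedMeasure) (ν := ν.toSignedMeasure) Set.univ

lemma totalVariation_toSignedMeasure_sub_le_of_le_smul {μ ν : Measure X}
    [IsProbabilityMeasure μ] [IsProbabilityMeasure ν] {b : ℝ≥0∞} (hb : b ≠ ∞) (h : μ ≤ b • ν) :
    (μ.toSignedMeasure - ν.toSignedMeasure).totalVariation Set.univ ≤ 2 * (b - 1) := by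
  have hb1 : 1 ≤ b := by simpa using h Set.univ
  have : IsFiniteMeasure (b • ν) := ν.smul_finite hb
  have : IsFiniteMeasure ((b - 1) • ν) := ν.smul_finite (by finiteness)
  have hsplit : ((b - 1) • ν) + ν = (b • ν - μ) + μ := by
    rw [Measure.sub_add_cancel_of_le h]
    nth_rw 2 [← one_smul ℝ≥0∞ ν]
    rw [← add_smul, tsub_add_cancel_of_le hb1]
  have hsigned : μ.toSignedMeasure - ν.toSignedMeasure
      = ((b - 1) • ν).toSignedMeasure - (b • ν - μ).toSignedMeasure := by
    have := Measure.toSignedMeasure_congr hsplit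
    rw [Measure.toSignedMeasure_add, Measure.toSignedMeasure_add] at this
    exact sub_eq_sub_iff_add_eq_add.mpr ((add_comm _ _).trans this.symm)
  calc _ ≤ ((b - 1) • ν) Set.univ + (b • ν - μ) Set.univ :=
        hsigned ▸ totalVariation_toSignedMeasure_sub_le _ _
    _ = 2 * (b - 1) := by
      rw [Measure.sub_apply MeasurableSet.univ h]
      simp [two_mul]

end TotalVariation

section Symmetrization

open Equiv

variable {ι κ α : Type*} [Fintype ι] [DecidableEq ι] [Fintype κ] [MeasurableSpace α]

noncomputable def symmetrizedPi (μ : ι → Measure α) : Measure (ι → α) :=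
  ((Fintype.card ι).factorial : ℝ≥0∞)⁻¹ • ∑ π : Perm ι, Measure.pi fun i => μ (π i)

variable (μ : ι → Measure α) [∀ i, IsProbabilityMeasure (μ i)]

lemma symmetrizedPi_map_comp_embedding (e : κ ↪ ι) :
    (symmetrizedPi μ).map (fun z i => z (e i))
      = (((Fintype.card ι - Fintype.card κ).factorial : ℝ≥0∞) / (Fintype.card ι).factorial) •
          ∑ f : κ ↪ ι, Measure.pi fun i => μ (f i) := by
  have hsummand (π : Perm ι) : (Measure.pi fun i => μ (π i)).map (fun z i => z (e i))
      = Measure.pi fun i => μ ((e.trans π.toEmbedding) i) :=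
    Measure.pi_map_comp_embedding (fun i => μ (π i)) e
  rw [symmetrizedPi, Measure.map_smul,
    Measure.map_finset_sum (measurable_pi_lambda _ fun i => measurable_pi_apply _).aemeasurable]
  simp only [hsummand]
  rw [Perm.sum_comp_trans_embedding e (fun f => Measure.pi fun i => μ (f i)),
    ← Nat.cast_smul_eq_nsmul ℝ≥0∞, smul_smul, ENNReal.div_eq_inv_mul]

lemma symmetrizedPi_map_eval (a : ι) :
    (symmetrizedPi μ).map (Function.eval a) = (Fintype.card ι : ℝ≥0∞)⁻¹ • ∑ j, μ j := by
  let g : Unit ↪ ι := ⟨fun _ => a, fun _ _ _ => rfl⟩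
  have hsum : ∑ π : Perm ι, μ (π a) = ((Fintype.card ι - 1).factorial : ℝ≥0∞) • ∑ j, μ j := by
    change ∑ π : Perm ι, μ ((g.trans π.toEmbedding) ()) = _
    rw [Perm.sum_comp_trans_embedding g (fun f => μ (f ())), Fintype.card_unit,
      ← Nat.cast_smul_eq_nsmul ℝ≥0∞]
    congr 1
    exact Fintype.sum_equiv Function.Embedding.oneEmbeddingEquiv _ _ fun _ => rfl
  have hcoef : ((Fintype.card ι).factorial : ℝ≥0∞)⁻¹ * (Fintype.card ι - 1).factorial
      = (Fintype.card ι : ℝ≥0∞)⁻¹ := by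
    have : Nonempty ι := ⟨a⟩
    have hcard : Fintype.card ι ≠ 0 := Fintype.card_ne_zero
    rw [← Nat.mul_factorial_pred hcard, Nat.cast_mul,
      ENNReal.mul_inv (.inr (ENNReal.natCast_ne_top _)) (.inl (ENNReal.natCast_ne_top _)),
      mul_assoc, ENNReal.inv_mul_cancel (by exact_mod_cast Nat.factorial_ne_zero _)
        (ENNReal.natCast_ne_top _), mul_one]
  rw [symmetrizedPi, Measure.map_smul, Measure.map_finset_sum (measurable_pi_apply a).aemeasurable]
  simp only [(measurePreserving_eval _ a).map_eq]
  rw [hsum, smul_smul, hcoef]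

lemma symmetrizedPi_map_comp_embedding_le (e : κ ↪ ι) (a : ι) :
    (symmetrizedPi μ).map (fun z i => z (e i))
      ≤ (((Fintype.card ι - Fintype.card κ).factorial : ℝ≥0∞) * Fintype.card ι ^ Fintype.card κ
          / (Fintype.card ι).factorial) •
        Measure.pi fun _ : κ => (symmetrizedPi μ).map (Function.eval a) := by
  classical
  have : Nonempty ι := ⟨a⟩
  have hcard : (Fintype.card ι : ℝ≥0∞) ≠ 0 := by simp
  have hcoef : ((Fintype.card ι - Fintype.card κ).factorial : ℝ≥0∞)
      * Fintype.card ι ^ Fintype.card κ / (Fintype.card ι).factorial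
      * (Fintype.card ι : ℝ≥0∞)⁻¹ ^ Fintype.card κ
      = ((Fintype.card ι - Fintype.card κ).factorial : ℝ≥0∞) / (Fintype.card ι).factorial := by
    calc _ = ((Fintype.card ι - Fintype.card κ).factorial : ℝ≥0∞) / (Fintype.card ι).factorial
          * ((Fintype.card ι : ℝ≥0∞) * (Fintype.card ι : ℝ≥0∞)⁻¹) ^ Fintype.card κ := by
          rw [mul_pow, ENNReal.div_eq_inv_mul, ENNReal.div_eq_inv_mul]
          ring
      _ = _ := by rw [ENNReal.mul_inv_cancel hcard (ENNReal.natCast_ne_top _), one_pow, mul_one]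
  rw [symmetrizedPi_map_comp_embedding, symmetrizedPi_map_eval,
    Measure.pi_smul_sum _ (ENNReal.inv_ne_top.2 hcard), smul_smul, hcoef]
  gcongr
  calc ∑ f : κ ↪ ι, Measure.pi (fun i => μ (f i))
      = ∑ f ∈ Finset.univ.map ⟨_, DFunLike.coe_injective⟩, Measure.pi fun i => μ (f i) :=
        (Finset.sum_map Finset.univ ⟨_, DFunLike.coe_injective⟩
          fun f : κ → ι => Measure.pi fun i => μ (f i)).symm
    _ ≤ ∑ f : κ → ι, Measure.pi fun i => μ (f i) :=
        Finset.sum_le_sum_of_subset_of_nonneg (Finset.subset_univ _) fun _ _ _ => Measure.zero_le _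

end Symmetrization

end MeasureTheory

theorem stmt3_general (n p : ℕ) (hn : 0 < n) (hpn : p ≤ n)
    (μ : Fin n → Measure ℂ) [∀ i, IsProbabilityMeasure (μ i)]
    (ν : Measure (Fin n → ℂ))
    (hν : ν = (n.factorial : ℝ≥0∞)⁻¹ •
      ∑ π : Equiv.Perm (Fin n), Measure.pi fun i => μ (π i))
    (νp : Measure (Fin p → ℂ)) [IsProbabilityMeasure νp]
    (hνp : νp = ν.map fun z (i : Fin p) => z (Fin.castLE hpn i))
    (ν1 : Measure ℂ) [IsProbabilityMeasure ν1]
    (hν1 : ν1 = ν.map fun z => z ⟨0, hn⟩) :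
    (νp.toSignedMeasure -
        (Measure.pi fun _ : Fin p => ν1).toSignedMeasure).totalVariation Set.univ
      ≤ ENNReal.ofReal
          (2 * (((n - p).factorial : ℝ) * (n : ℝ) ^ p / (n.factorial : ℝ) - 1)) := by
  set b : ℝ := ((n - p).factorial : ℝ) * (n : ℝ) ^ p / (n.factorial : ℝ)
  have hν' : ν = symmetrizedPi μ := by rw [hν, symmetrizedPi, Fintype.card_fin]
  have hb : ENNReal.ofReal b
      = ((n - p).factorial : ℝ≥0∞) * (n : ℝ≥0∞) ^ p / (n.factorial : ℝ≥0∞) := by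
    rw [ENNReal.ofReal_div_of_pos (by positivity), ENNReal.ofReal_mul (by positivity),
      ENNReal.ofReal_pow (by positivity)]
    simp only [ENNReal.ofReal_natCast]
  have hle : νp ≤ ENNReal.ofReal b • Measure.pi fun _ : Fin p => ν1 := by
    have := symmetrizedPi_map_comp_embedding_le μ (Fin.castLEEmb hpn) ⟨0, hn⟩
    simp only [Fintype.card_fin] at this
    rwa [hb, hνp, hν1, hν']
  calc _ ≤ 2 * (ENNReal.ofReal b - 1) :=
        totalVariation_toSignedMeasure_sub_le_of_le_smul ENNReal.ofReal_ne_top hle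
    _ = _ := by
        rw [ENNReal.ofReal_mul zero_le_two, ENNReal.ofReal_sub _ zero_le_one, ENNReal.ofReal_one,
          ENNReal.ofReal_ofNat]

/-- Total variation bound for the difference between the `p`-th marginal of the
symmetrization `ν̃ = (1/n!)·Σ_{π∈Sₙ} μ_{π(1)}×⋯×μ_{π(n)}` and the `p`-fold product of its
first marginal `ν̃⁽¹⁾`:  `‖ν̃⁽ᵖ⁾ − ν̃⁽¹⁾×⋯×ν̃⁽¹⁾‖ ≤ 2·((n−p)!·nᵖ/n! − 1)`. -/
theorem stmt3 (n p : ℕ) (hn : 0 < n) (hp1 : 1 ≤ p) (hpn : p ≤ n)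
    (μ : Fin n → Measure ℂ) [∀ i, IsProbabilityMeasure (μ i)]
    (ν : Measure (Fin n → ℂ))
    (hν : ν = (n.factorial : ℝ≥0∞)⁻¹ •
      ∑ π : Equiv.Perm (Fin n), Measure.pi fun i => μ (π i))
    (νp : Measure (Fin p → ℂ)) [IsProbabilityMeasure νp]
    (hνp : νp = ν.map fun z (i : Fin p) => z (Fin.castLE hpn i))
    (ν1 : Measure ℂ) [IsProbabilityMeasure ν1]
    (hν1 : ν1 = ν.map fun z => z ⟨0, hn⟩) :
    (νp.toSignedMeasure -
        (Measure.pi fun _ : Fin p => ν1).toSignedMeasure).totalVariation Set.univ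
      ≤ ENNReal.ofReal
          (2 * (((n - p).factorial : ℝ) * (n : ℝ) ^ p / (n.factorial : ℝ) - 1)) :=
  stmt3_general n p hn hpn μ ν hν νp hνp ν1 hν1
end

section
/- Let H be a complex Hilbert space and let A and B be bounded linear operators on H. If A is normal (A*A = AA*), then the spectrum of A + B is contained in {z ∈ ℂ : dist(z, σ(A)) ≤ ‖B‖}, where σ(A) is the spectrum of A, dist denotes the distance from a point to a set, and ‖B‖ is the operator norm of B. -/
/-!
If `z ∉ σ(a)`, then `z - (a + b) = (z - a)(1 - (z - a)⁻¹ b)` is invertible as soon as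
`‖b‖ < ‖(z - a)⁻¹‖⁻¹`. For normal `a` the resolvent `(z - a)⁻¹` is normal, so its norm equals its
spectral radius; a spectral value `μ` of maximal modulus satisfies `μ⁻¹ = z - y` with `y ∈ σ(a)`,
whence `‖(z - a)⁻¹‖⁻¹ = |z - y| ≥ dist(z, σ(a))`.
-/

open ContinuousLinearMap

lemma spectrum.notMem_add_of_norm_lt_inv_norm_inverse {𝕜 A : Type*} [NormedField 𝕜]
    [NormedRing A] [NormedAlgebra 𝕜 A] [HasSummableGeomSeries A] {a : A} {z : 𝕜}
    (hz : z ∉ spectrum 𝕜 a) {b : A} (hb : ‖b‖ < ‖Ring.inverse (algebraMap 𝕜 A z - a)‖⁻¹) :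
    z ∉ spectrum 𝕜 (a + b) := by
  obtain ⟨u, hu⟩ := spectrum.notMem_iff.mp hz
  rw [← hu, Ring.inverse_unit, ← norm_neg] at hb
  rw [spectrum.notMem_iff, ← sub_sub, sub_eq_add_neg, ← hu]
  exact (u.add (-b) hb).isUnit

section CStarAlgebra

variable {A : Type*} [CStarAlgebra A]

instance IsStarNormal.algebraMap_sub (z : ℂ) (a : A) [IsStarNormal a] :
    IsStarNormal (algebraMap ℂ A z - a) where
  star_comm_self := by
    rw [star_sub, ← algebraMap_star_comm]
    exact ((Algebra.commute_algebraMap_left _ _).sub_right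
        (Algebra.commute_algebraMap_left _ _)).sub_left
      ((Algebra.commute_algebraMap_left _ _).symm.sub_right (star_comm_self' a))

lemma IsStarNormal.infDist_spectrum_le_inv_norm_inverse (a : A) [IsStarNormal a] (z : ℂ) :
    Metric.infDist z (spectrum ℂ a) ≤ ‖Ring.inverse (algebraMap ℂ A z - a)‖⁻¹ := by
  nontriviality A
  by_cases hz : z ∈ spectrum ℂ a
  · rw [Metric.infDist_zero_of_mem hz]
    positivity
  obtain ⟨u, hu⟩ := spectrum.notMem_iff.mp hz
  have : IsStarNormal (u : A) := hu ▸ inferInstance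
  obtain ⟨μ, hμ, hμ_norm⟩ := spectrum.exists_nnnorm_eq_spectralRadius (↑u⁻¹ : A)
  rw [IsStarNormal.spectralRadius_eq_nnnorm, ENNReal.coe_inj] at hμ_norm
  rw [← spectrum.map_inv, Set.mem_inv, hu, ← spectrum.singleton_sub_eq] at hμ
  obtain ⟨_, rfl, y, hy, hzy⟩ := hμ
  rw [← hu, Ring.inverse_unit, ← coe_nnnorm, ← hμ_norm, coe_nnnorm, ← norm_inv, ← hzy,
    ← dist_eq_norm]
  exact Metric.infDist_le_dist_of_mem hy

end CStarAlgebra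

/-- If `A` is a normal bounded operator and `B` any bounded operator on a complex Hilbert
space, then `σ(A+B) ⊆ {z : dist(z, σ(A)) ≤ ‖B‖}`. -/
theorem stmt6 {H : Type*} [NormedAddCommGroup H] [InnerProductSpace ℂ H] [CompleteSpace H]
    (A B : H →L[ℂ] H) (hA : adjoint A * A = A * adjoint A) :
    spectrum ℂ (A + B) ⊆ {z : ℂ | Metric.infDist z (spectrum ℂ A) ≤ ‖B‖} := by
  have hA_normal : IsStarNormal A := ⟨by rw [Commute, SemiconjBy, star_eq_adjoint, hA]⟩
  intro z hz
  refine not_lt.mp fun (hB : ‖B‖ < Metric.infDist z (spectrum ℂ A)) ↦ ?_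
  have hzA : z ∉ spectrum ℂ A := fun h ↦ by
    rw [Metric.infDist_zero_of_mem h] at hB
    exact (norm_nonneg B).not_gt hB
  exact spectrum.notMem_add_of_norm_lt_inv_norm_inverse hzA
    (hB.trans_le (IsStarNormal.infDist_spectrum_le_inv_norm_inverse A z)) hz
end

section
/- Define γ(0) = 1 and, for p ≥ 1, γ(p) = p^p/(p+1)!. Then there exists r > 0 such that for every w ∈ ℂ with |w| < r, the series Σ_{p=0}^∞ γ(p)·(w·e^{−w})^{p+1} converges and equals 1 − e^{−w}. (Equivalently: the function L(t) = t/(1 − Σ_{p=0}^∞ γ(p)·t^{p+1}) is defined, analytic and invertible with respect to composition in a neighborhood of 0, with inverse L^{⟨−1⟩}(z) = z·e^{−z}.) -/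
/-!
Multiplying by `e^w`, the claim becomes `Σ_p γ(p) w^{p+1} e^{-p w} = e^w - 1`. Expanding each
`e^{-p w}` gives a double series which, since `γ(p) ≤ e^p`, converges absolutely as soon as
`|w| e^{1+|w|} < 1`. Regrouped by total degree, the coefficient of `w^{n+1}` is
`Σ_p γ(p) (-p)^{n-p} / (n-p)! = (n+1)!⁻¹ Σ_p (-1)^{n-p} C(n+1, p+1) p^n`, and the last sum is `1`:
up to its `p = -1` term it is the `(n+1)`-st forward difference of the degree-`n` polynomial
`(x - 1)^n` at `0`.
-/

open Finset
open scoped Nat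

/-- `γ(p) = p^p/(p+1)!`, with `γ(0) = 1` (using the convention `0⁰ = 1`). -/
noncomputable def gammaCoeff (p : ℕ) : ℝ :=
  (p : ℝ) ^ p / ((p + 1).factorial : ℝ)

theorem sum_range_neg_one_pow_mul_choose_mul_pow {R : Type*} [CommRing R] (n : ℕ) :
    ∑ p ∈ range (n + 1), (-1 : R) ^ (n - p) * (n + 1).choose (p + 1) * (p : R) ^ n = 1 := by
  have h := congr_fun (fwdDiff_iter_pow_eq_zero_of_lt (R := R) (Nat.lt_succ_self n)) (-1)
  rw [fwdDiff_iter_eq_sum_shift, sum_range_succ'] at h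
  simp only [Nat.succ_sub_succ] at h
  simpa [pow_succ, ← mul_pow, add_eq_zero_iff_eq_neg] using h

theorem sum_antidiagonal_gammaCoeff_mul (n : ℕ) :
    ∑ pk ∈ antidiagonal n, gammaCoeff pk.1 * (-(pk.1 : ℝ)) ^ pk.2 / pk.2 ! = 1 / (n + 1)! := by
  rw [Nat.sum_antidiagonal_eq_sum_range_succ_mk,
    ← sum_range_neg_one_pow_mul_choose_mul_pow (R := ℝ) n, sum_div]
  refine sum_congr rfl fun p hp => ?_
  have hpn : p ≤ n := Nat.lt_succ_iff.mp (mem_range.mp hp)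
  have hpow : (p : ℝ) ^ n = p ^ p * p ^ (n - p) := by rw [← pow_add, Nat.add_sub_cancel' hpn]
  rw [Nat.cast_choose ℝ (Nat.succ_le_succ hpn), Nat.succ_sub_succ, gammaCoeff, neg_pow, hpow]
  field_simp

theorem gammaCoeff_nonneg (p : ℕ) : 0 ≤ gammaCoeff p := by
  unfold gammaCoeff; positivity

theorem gammaCoeff_le_exp (p : ℕ) : gammaCoeff p ≤ Real.exp p :=
  calc gammaCoeff p ≤ (p : ℝ) ^ p / p ! := by
        unfold gammaCoeff
        gcongr
        exact p.le_succ
    _ ≤ Real.exp p := Real.pow_div_factorial_le_exp _ p.cast_nonneg p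

theorem Real.hasSum_pow_div_factorial (x : ℝ) : HasSum (fun n => x ^ n / n !) (Real.exp x) :=
  Real.exp_eq_exp_ℝ ▸ NormedSpace.expSeries_div_hasSum_exp x

theorem Complex.hasSum_pow_div_factorial (z : ℂ) : HasSum (fun n => z ^ n / n !) (Complex.exp z) :=
  Complex.exp_eq_exp_ℂ ▸ NormedSpace.expSeries_div_hasSum_exp z

theorem HasSum.sum_antidiagonal {M : Type*} [AddCommMonoid M] [TopologicalSpace M]
    [ContinuousAdd M] [RegularSpace M] {f : ℕ × ℕ → M} {a : M} (h : HasSum f a) :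
    HasSum (fun n => ∑ pk ∈ antidiagonal n, f pk) a := by
  refine ((HasAntidiagonal.sigmaAntidiagonalEquivProd.hasSum_iff).2 h).sigma fun n => ?_
  rw [← sum_finset_coe]
  exact hasSum_fintype _

/-- The `(p, k)` term of the double series obtained by expanding `e^{-p w}` in
`Σ_p γ(p) w^{p+1} e^{-p w}`. -/
noncomputable def gammaExpTerm (w : ℂ) (pk : ℕ × ℕ) : ℂ :=
  (gammaCoeff pk.1 * (-(pk.1 : ℝ)) ^ pk.2 / pk.2 ! : ℝ) * w ^ (pk.1 + pk.2 + 1)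

theorem hasSum_gammaExpTerm_fiber (w : ℂ) (p : ℕ) :
    HasSum (fun k => gammaExpTerm w (p, k)) (gammaCoeff p * w ^ (p + 1) * Complex.exp (-p * w)) := by
  refine ((Complex.hasSum_pow_div_factorial (-p * w)).mul_left
    (gammaCoeff p * w ^ (p + 1))).congr_fun fun k => ?_
  simp only [gammaExpTerm]
  push_cast
  ring

theorem sum_antidiagonal_gammaExpTerm (w : ℂ) (n : ℕ) :
    ∑ pk ∈ antidiagonal n, gammaExpTerm w pk = w ^ (n + 1) / (n + 1)! := by
  have hpow : ∀ pk ∈ antidiagonal n, gammaExpTerm w pk =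
      (gammaCoeff pk.1 * (-(pk.1 : ℝ)) ^ pk.2 / pk.2 ! : ℝ) * w ^ (n + 1) := by
    intro pk hpk
    rw [gammaExpTerm, mem_antidiagonal.mp hpk]
  rw [sum_congr rfl hpow, ← sum_mul, ← Complex.ofReal_sum, sum_antidiagonal_gammaCoeff_mul]
  push_cast
  ring

theorem norm_gammaExpTerm (w : ℂ) (p k : ℕ) :
    ‖gammaExpTerm w (p, k)‖ = gammaCoeff p * ‖w‖ ^ (p + 1) * ((p * ‖w‖) ^ k / k !) := by
  simp only [gammaExpTerm, norm_mul, norm_div, norm_pow, Complex.norm_real, norm_neg,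
    Real.norm_natCast, Real.norm_of_nonneg (gammaCoeff_nonneg p)]
  ring

theorem summable_gammaExpTerm {w : ℂ} (hw : ‖w‖ * Real.exp (1 + ‖w‖) < 1) :
    Summable (gammaExpTerm w) := by
  have hfiber (p : ℕ) : HasSum (fun k => ‖gammaExpTerm w (p, k)‖)
      (gammaCoeff p * ‖w‖ ^ (p + 1) * Real.exp (p * ‖w‖)) := by
    simpa only [norm_gammaExpTerm] using
      (Real.hasSum_pow_div_factorial (p * ‖w‖)).mul_left (gammaCoeff p * ‖w‖ ^ (p + 1))
  have hbound (p : ℕ) : gammaCoeff p * ‖w‖ ^ (p + 1) * Real.exp (p * ‖w‖) ≤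
      ‖w‖ * (‖w‖ * Real.exp (1 + ‖w‖)) ^ p :=
    calc gammaCoeff p * ‖w‖ ^ (p + 1) * Real.exp (p * ‖w‖)
        ≤ Real.exp p * ‖w‖ ^ (p + 1) * Real.exp (p * ‖w‖) := by
          gcongr; exact gammaCoeff_le_exp p
      _ = ‖w‖ * (‖w‖ * Real.exp (1 + ‖w‖)) ^ p := by
          rw [mul_pow, ← Real.exp_nat_mul, mul_add, mul_one, Real.exp_add, pow_succ]
          ring
  refine .of_norm ((summable_prod_of_nonneg fun _ => norm_nonneg _).2
    ⟨fun p => (hfiber p).summable, ?_⟩)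
  simp only [(hfiber _).tsum_eq]
  exact .of_nonneg_of_le (fun p => by have := gammaCoeff_nonneg p; positivity) hbound
    ((summable_geometric_of_lt_one (by positivity) hw).mul_left _)

theorem hasSum_gammaCoeff_mul_exp {w : ℂ} (hw : ‖w‖ * Real.exp (1 + ‖w‖) < 1) :
    HasSum (fun p : ℕ => gammaCoeff p * w ^ (p + 1) * Complex.exp (-p * w))
      (Complex.exp w - 1) := by
  have hT := (summable_gammaExpTerm hw).hasSum
  have hdiag := hT.sum_antidiagonal
  simp only [sum_antidiagonal_gammaExpTerm] at hdiag
  have hexp : HasSum (fun n : ℕ => w ^ (n + 1) / (n + 1)!) (Complex.exp w - 1) := by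
    simpa using (hasSum_nat_add_iff' 1).2 (Complex.hasSum_pow_div_factorial w)
  rw [← hdiag.unique hexp]
  exact hT.prod_fiberwise (hasSum_gammaExpTerm_fiber w)

/-- The function `L(t) = t/(1 − Σ_p γ(p)·t^{p+1})` has compositional inverse `z·e^{−z}`
near `0`: for `w` near `0`, `Σ_p γ(p)·(w·e^{−w})^{p+1}` converges to `1 − e^{−w}`. -/
theorem stmt11 :
    ∃ r : ℝ, 0 < r ∧ ∀ w : ℂ, ‖w‖ < r →
      HasSum (fun p : ℕ => (gammaCoeff p : ℂ) * (w * Complex.exp (-w)) ^ (p + 1))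
        (1 - Complex.exp (-w)) := by
  refine ⟨1 / 8, by norm_num, fun w hw => ?_⟩
  have hsmall : ‖w‖ * Real.exp (1 + ‖w‖) < 1 :=
    calc ‖w‖ * Real.exp (1 + ‖w‖) ≤ 1 / 8 * Real.exp 2 := by
          gcongr
          linarith
      _ < 1 := by
          rw [show (2 : ℝ) = 1 + 1 by norm_num, Real.exp_add]
          nlinarith [Real.exp_pos 1, Real.exp_one_lt_d9]
  have h := (hasSum_gammaCoeff_mul_exp hsmall).mul_right (Complex.exp (-w))
  rw [sub_mul, ← Complex.exp_add, add_neg_cancel, Complex.exp_zero, one_mul] at h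
  refine h.congr_fun fun p => ?_
  have hexp : Complex.exp (-w) ^ (p + 1) = Complex.exp (-p * w) * Complex.exp (-w) := by
    rw [← Complex.exp_nat_mul, ← Complex.exp_add]
    push_cast
    ring_nf
  rw [mul_pow, hexp]
  ring
end

section
/- Define ρ : (0,π) → ℝ by ρ(v) = (sin v / v)·exp(v·cot v). Then ρ is strictly decreasing on (0,π), ρ(v) → e as v → 0⁺, ρ(v) → 0 as v → π⁻, and ρ is a bijection from (0,π) onto (0,e). -/
/-!
The logarithmic derivative of `ρ` is `-((v - sin v cos v)² + sin⁴ v) / (v sin² v) < 0`.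
Near `0`, `ρ v = sinc v · exp (cos v / sinc v)`, which is continuous at `0` with value `e`;
near `π`, `v cot v ≤ 0`, so `0 < ρ v ≤ sin v / v → 0`. A continuous strictly decreasing map
on `(0, π)` with these one-sided limits maps it bijectively onto `(0, e)` by the intermediate
value theorem.
-/

open Real Filter Set Topology

noncomputable def rhoFun (v : ℝ) : ℝ :=
  (Real.sin v / v) * Real.exp (v * (Real.cos v / Real.sin v))

section StrictAntiOnIoo

variable {α β : Type*} [TopologicalSpace α] [TopologicalSpace β] [LinearOrder β]
  [OrderClosedTopology β] {f : α → β} {A B : β}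

section LinearOrder

variable [LinearOrder α] [OrderTopology α] [DenselyOrdered α] {a b : α}

theorem StrictAntiOn.lt_of_tendsto_nhdsGT (hf : StrictAntiOn f (Ioo a b))
    (hA : Tendsto f (𝓝[>] a) (𝓝 A)) {x : α} (hx : x ∈ Ioo a b) : f x < A := by
  obtain ⟨y, hay, hyx⟩ := exists_between hx.1
  have hy : y ∈ Ioo a b := ⟨hay, hyx.trans hx.2⟩
  have := nhdsGT_neBot_of_exists_gt ⟨y, hay⟩
  have hfy : f y ≤ A := ge_of_tendsto hA <| by
    filter_upwards [Ioo_mem_nhdsGT hay] with z hz using (hf ⟨hz.1, hz.2.trans hy.2⟩ hy hz.2).le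
  exact (hf hy hx hyx).trans_le hfy

theorem StrictAntiOn.gt_of_tendsto_nhdsLT (hf : StrictAntiOn f (Ioo a b))
    (hB : Tendsto f (𝓝[<] b) (𝓝 B)) {x : α} (hx : x ∈ Ioo a b) : B < f x := by
  obtain ⟨y, hxy, hyb⟩ := exists_between hx.2
  have hy : y ∈ Ioo a b := ⟨hx.1.trans hxy, hyb⟩
  have := nhdsLT_neBot_of_exists_lt ⟨y, hyb⟩
  have hfy : B ≤ f y := le_of_tendsto hB <| by
    filter_upwards [Ioo_mem_nhdsLT hyb] with z hz using (hf hy ⟨hy.1.trans hz.1, hz.2⟩ hz.1).le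
  exact hfy.trans_lt (hf hx hy hxy)

end LinearOrder

theorem StrictAntiOn.bijOn_Ioo_of_tendsto [ConditionallyCompleteLinearOrder α] [OrderTopology α]
    [DenselyOrdered α] {a b : α} (hab : a < b) (hf : StrictAntiOn f (Ioo a b))
    (hcont : ContinuousOn f (Ioo a b)) (hA : Tendsto f (𝓝[>] a) (𝓝 A))
    (hB : Tendsto f (𝓝[<] b) (𝓝 B)) : BijOn f (Ioo a b) (Ioo B A) := by
  refine ⟨fun x hx => ⟨hf.gt_of_tendsto_nhdsLT hB hx, hf.lt_of_tendsto_nhdsGT hA hx⟩,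
    hf.injOn, ?_⟩
  have := right_nhdsWithin_Ioo_neBot hab
  have := left_nhdsWithin_Ioo_neBot hab
  refine isPreconnected_Ioo.intermediate_value_Ioo (l₁ := 𝓝[Ioo a b] b)
    (l₂ := 𝓝[Ioo a b] a) inf_le_right inf_le_right hcont ?_ ?_
  · rwa [nhdsWithin_Ioo_eq_nhdsLT hab]
  · rwa [nhdsWithin_Ioo_eq_nhdsGT hab]

end StrictAntiOnIoo

theorem rhoFun_pos {v : ℝ} (hv : v ∈ Ioo 0 π) : 0 < rhoFun v := by
  have := sin_pos_of_pos_of_lt_pi hv.1 hv.2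
  have := hv.1
  unfold rhoFun
  positivity

theorem rhoFun_eq_sinc_mul_exp {v : ℝ} (hv : v ≠ 0) :
    rhoFun v = sinc v * exp (cos v / sinc v) := by
  rw [rhoFun, sinc_of_ne_zero hv, div_div_eq_mul_div, mul_div_assoc', mul_comm v]

theorem hasDerivAt_rhoFun {v : ℝ} (hv : v ≠ 0) (hs : sin v ≠ 0) :
    HasDerivAt rhoFun
      (-rhoFun v * (((v - sin v * cos v) ^ 2 + sin v ^ 4) / (v * sin v ^ 2))) v := by
  have hsinc : HasDerivAt (fun x => sin x / x) ((cos v * v - sin v * 1) / v ^ 2) v :=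
    (hasDerivAt_sin v).div (hasDerivAt_id v) hv
  have hcot : HasDerivAt (fun x => cos x / sin x)
      ((-sin v * sin v - cos v * cos v) / sin v ^ 2) v :=
    (hasDerivAt_cos v).div (hasDerivAt_sin v) hs
  refine (hsinc.mul ((hasDerivAt_id v).mul hcot).exp).congr_deriv ?_
  simp only [rhoFun, Pi.mul_apply, id]
  field_simp
  linear_combination (sin v ^ 2 - v ^ 2) * sin_sq_add_cos_sq v

theorem continuousOn_rhoFun : ContinuousOn rhoFun (Ioo 0 π) := fun _ hv =>
  (hasDerivAt_rhoFun hv.1.ne' (sin_pos_of_pos_of_lt_pi hv.1 hv.2).ne').continuousAt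
    |>.continuousWithinAt

theorem strictAntiOn_rhoFun : StrictAntiOn rhoFun (Ioo 0 π) := by
  refine strictAntiOn_of_deriv_neg (convex_Ioo 0 π) continuousOn_rhoFun fun v hv => ?_
  rw [interior_Ioo] at hv
  have hs := sin_pos_of_pos_of_lt_pi hv.1 hv.2
  have := hv.1
  rw [(hasDerivAt_rhoFun hv.1.ne' hs.ne').deriv, neg_mul, neg_lt_zero]
  exact mul_pos (rhoFun_pos hv) (by positivity)

theorem tendsto_rhoFun_nhdsGT_zero : Tendsto rhoFun (𝓝[>] 0) (𝓝 (exp 1)) := by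
  have hcont : ContinuousAt (fun v => sinc v * exp (cos v / sinc v)) 0 :=
    continuous_sinc.continuousAt.mul
      ((continuous_cos.continuousAt.div continuous_sinc.continuousAt (by simp)).rexp)
  have h := hcont.tendsto.mono_left (nhdsWithin_le_nhds (s := Ioi 0))
  simp only [sinc_zero, cos_zero, div_one, one_mul] at h
  exact h.congr' <| eventually_nhdsWithin_of_forall fun v hv =>
    (rhoFun_eq_sinc_mul_exp (ne_of_gt hv)).symm

theorem rhoFun_le_sin_div_self {v : ℝ} (hv : v ∈ Icc (π / 2) π) : rhoFun v ≤ sin v / v := by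
  have hv0 : 0 < v := by linarith [hv.1, pi_pos]
  have hs : 0 ≤ sin v := sin_nonneg_of_nonneg_of_le_pi hv0.le hv.2
  have hc : cos v ≤ 0 := cos_nonpos_of_pi_div_two_le_of_le hv.1 (by linarith [hv.2, pi_pos])
  have hexp : exp (v * (cos v / sin v)) ≤ 1 := exp_le_one_iff.mpr <|
    mul_nonpos_of_nonneg_of_nonpos hv0.le (div_nonpos_of_nonpos_of_nonneg hc hs)
  exact mul_le_of_le_one_right (by positivity) hexp

theorem tendsto_rhoFun_nhdsLT_pi : Tendsto rhoFun (𝓝[<] π) (𝓝 0) := by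
  have hsinc : Tendsto (fun v => sin v / v) (𝓝[<] π) (𝓝 0) := by
    have h := (continuous_sin.tendsto π).div tendsto_id pi_ne_zero
    rw [sin_pi, zero_div] at h
    exact h.mono_left nhdsWithin_le_nhds
  have hnear : Ioo (π / 2) π ∈ 𝓝[<] π := Ioo_mem_nhdsLT (by linarith [pi_pos])
  refine squeeze_zero' ?_ ?_ hsinc
  · filter_upwards [hnear] with v hv
    exact (rhoFun_pos ⟨by linarith [hv.1, pi_pos], hv.2⟩).le
  · filter_upwards [hnear] with v hv using rhoFun_le_sin_div_self (Ioo_subset_Icc_self hv)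

/-- `ρ` is strictly decreasing on `(0,π)`, tends to `e` at `0⁺` and to `0` at `π⁻`, and is a
bijection from `(0,π)` onto `(0,e)`. -/
theorem stmt12 :
    StrictAntiOn rhoFun (Set.Ioo 0 π) ∧
    Filter.Tendsto rhoFun (nhdsWithin 0 (Set.Ioi 0)) (nhds (Real.exp 1)) ∧
    Filter.Tendsto rhoFun (nhdsWithin π (Set.Iio π)) (nhds 0) ∧
    Set.BijOn rhoFun (Set.Ioo 0 π) (Set.Ioo 0 (Real.exp 1)) :=
  ⟨strictAntiOn_rhoFun, tendsto_rhoFun_nhdsGT_zero, tendsto_rhoFun_nhdsLT_pi,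
    strictAntiOn_rhoFun.bijOn_Ioo_of_tendsto pi_pos continuousOn_rhoFun
      tendsto_rhoFun_nhdsGT_zero tendsto_rhoFun_nhdsLT_pi⟩
end
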